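/- arXiv:2504.12866 — 5 statements merged into one kernel-verified Lean document; each statement's English description precedes it below -/
import Mathlib

section
/- Let μ be an atomless probability measure on [0,∞) and let ν be the uniform probability measure on [0,2π). With respect to the product measure μ ⊗ μ ⊗ ν ⊗ ν on (t₁,t₂,θ₁,θ₂), the measure of the set {(t₁,t₂,θ₁,θ₂) : D(t₁,t₂,θ₁,θ₂) ≤ r} equals (4/π)·∫₀^r μ([0,t])·arccos(t/r) dμ(t), for every r > 0. -/
open MeasureTheory Real
open scoped ENNReal

/-- Distance from the origin to the intersection point of the lines
`{(x,y) : x cos θᵢ + y sin θᵢ = tᵢ}`, `i = 1, 2`. -/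
noncomputable def interDist (t₁ t₂ θ₁ θ₂ : ℝ) : ℝ :=
  Real.sqrt (t₁ ^ 2 + t₂ ^ 2 - 2 * t₁ * t₂ * Real.cos (θ₂ - θ₁)) / |Real.sin (θ₂ - θ₁)|

/-- Uniform probability measure on `[0, 2π)`. -/
noncomputable def unifCircle : Measure ℝ :=
  (ENNReal.ofReal (2 * π))⁻¹ • volume.restrict (Set.Ico 0 (2 * π))


lemma quad_eq {r t₁ t₂ : ℝ} (hr : 0 < r) (h1 : 0 ≤ t₁) (h1r : t₁ ≤ r)
    (h2 : 0 ≤ t₂) (h2r : t₂ ≤ r) (c : ℝ) :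
    t₁ ^ 2 + t₂ ^ 2 - 2 * t₁ * t₂ * c - r ^ 2 * (1 - c ^ 2) =
      r ^ 2 * ((c - Real.cos (arccos (t₁ / r) - arccos (t₂ / r))) *
        (c - Real.cos (arccos (t₁ / r) + arccos (t₂ / r)))) := by
  have hr0 : r ≠ 0 := hr.ne'
  have h1' : t₁ / r ≤ 1 := (div_le_one hr).2 h1r
  have h2' : t₂ / r ≤ 1 := (div_le_one hr).2 h2r
  have h1n : (-1 : ℝ) ≤ t₁ / r := by positivity |> le_trans (by norm_num : (-1:ℝ) ≤ 0)
  have h2n : (-1 : ℝ) ≤ t₂ / r := by positivity |> le_trans (by norm_num : (-1:ℝ) ≤ 0)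
  have hca : Real.cos (arccos (t₁ / r)) = t₁ / r := Real.cos_arccos h1n h1'
  have hcb : Real.cos (arccos (t₂ / r)) = t₂ / r := Real.cos_arccos h2n h2'
  have hsa : Real.sin (arccos (t₁ / r)) ^ 2 = 1 - (t₁ / r) ^ 2 := by
    rw [Real.sin_sq, hca]
  have hsb : Real.sin (arccos (t₂ / r)) ^ 2 = 1 - (t₂ / r) ^ 2 := by
    rw [Real.sin_sq, hcb]
  rw [Real.cos_sub, Real.cos_add, hca, hcb]
  have h : (Real.sin (arccos (t₁ / r)) * Real.sin (arccos (t₂ / r))) ^ 2 =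
      (1 - (t₁ / r) ^ 2) * (1 - (t₂ / r) ^ 2) := by rw [mul_pow, hsa, hsb]
  field_simp at h ⊢
  linear_combination h

lemma arccos_mem {r t : ℝ} (hr : 0 < r) (h : 0 ≤ t) :
    arccos (t / r) ∈ Set.Icc 0 (π / 2) :=
  ⟨Real.arccos_nonneg _, Real.arccos_le_pi_div_two.2 (by positivity)⟩

/-- Main pointwise equivalence on `(0, π)`. -/
lemma cond_iff {r t₁ t₂ φ : ℝ} (hr : 0 < r) (h1 : 0 ≤ t₁) (h1r : t₁ ≤ r)
    (h2 : 0 ≤ t₂) (h2r : t₂ ≤ r) (hφ0 : 0 < φ) (hφπ : φ < π) :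
    Real.sqrt (t₁ ^ 2 + t₂ ^ 2 - 2 * t₁ * t₂ * Real.cos φ) / |Real.sin φ| ≤ r ↔
      |arccos (t₁ / r) - arccos (t₂ / r)| ≤ φ ∧
        φ ≤ arccos (t₁ / r) + arccos (t₂ / r) := by
  set α := arccos (t₁ / r) with hα
  set β := arccos (t₂ / r) with hβ
  obtain ⟨hα0, hα2⟩ := arccos_mem hr h1
  obtain ⟨hβ0, hβ2⟩ := arccos_mem hr h2
  have hsin : 0 < Real.sin φ := Real.sin_pos_of_pos_of_lt_pi hφ0 hφπ
  have hπ : 0 < π := Real.pi_pos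
  rw [abs_of_pos hsin, div_le_iff₀ hsin, Real.sqrt_le_left (by positivity)]
  have hq := quad_eq hr h1 h1r h2 h2r (Real.cos φ)
  have hrs : (r * Real.sin φ) ^ 2 = r ^ 2 * (1 - Real.cos φ ^ 2) := by
    rw [mul_pow, Real.sin_sq]
  have hr2 : (0 : ℝ) < r ^ 2 := by positivity
  have key : t₁ ^ 2 + t₂ ^ 2 - 2 * t₁ * t₂ * Real.cos φ ≤ (r * Real.sin φ) ^ 2 ↔
      (Real.cos φ - Real.cos (α - β)) * (Real.cos φ - Real.cos (α + β)) ≤ 0 := by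
    rw [hrs, ← sub_nonpos, hq]
    constructor
    · intro h; nlinarith
    · intro h; nlinarith
  rw [key]
  have hba : Real.cos (α + β) ≤ Real.cos (α - β) := by
    rw [Real.cos_add, Real.cos_sub]
    nlinarith [Real.sin_nonneg_of_nonneg_of_le_pi hα0 (hα2.trans (by linarith)),
      Real.sin_nonneg_of_nonneg_of_le_pi hβ0 (hβ2.trans (by linarith))]
  have hcabs : Real.cos (α - β) = Real.cos |α - β| := (Real.cos_abs _).symm
  have hmem1 : |α - β| ∈ Set.Icc 0 π :=
    ⟨abs_nonneg _, abs_le.2 ⟨by linarith, by linarith⟩⟩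
  have hmem2 : α + β ∈ Set.Icc 0 π := ⟨by linarith, by linarith⟩
  have hmemφ : φ ∈ Set.Icc 0 π := ⟨hφ0.le, hφπ.le⟩
  constructor
  · intro hle
    have hpair : Real.cos (α + β) ≤ Real.cos φ ∧ Real.cos φ ≤ Real.cos (α - β) := by
      rcases mul_nonpos_iff.1 hle with ⟨ha, hb⟩ | ⟨ha, hb⟩
      · constructor <;> linarith
      · constructor <;> linarith
    refine ⟨?_, ?_⟩
    · have h2' := hpair.2; rw [hcabs] at h2'
      exact (Real.strictAntiOn_cos.le_iff_ge hmemφ hmem1).1 h2'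
    · exact (Real.strictAntiOn_cos.le_iff_ge hmem2 hmemφ).1 hpair.1
  · rintro ⟨hd, hs⟩
    have hc1 : Real.cos φ ≤ Real.cos (α - β) := by
      rw [hcabs]; exact (Real.strictAntiOn_cos.le_iff_ge hmemφ hmem1).2 hd
    have hc2 : Real.cos (α + β) ≤ Real.cos φ :=
      (Real.strictAntiOn_cos.le_iff_ge hmem2 hmemφ).2 hs
    exact mul_nonpos_of_nonpos_of_nonneg (by linarith) (by linarith)

/-- If one radius exceeds `r`, impossible (off `sin φ = 0`). -/
lemma cond_not {r t₁ t₂ φ : ℝ} (hr : 0 < r) (h1 : 0 ≤ t₁) (h2 : 0 ≤ t₂)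
    (hbig : r < t₁ ∨ r < t₂) (hsin : Real.sin φ ≠ 0) :
    ¬ Real.sqrt (t₁ ^ 2 + t₂ ^ 2 - 2 * t₁ * t₂ * Real.cos φ) / |Real.sin φ| ≤ r := by
  intro hle
  have habs : 0 < |Real.sin φ| := abs_pos.2 hsin
  rw [div_le_iff₀ habs, Real.sqrt_le_left (by positivity)] at hle
  have hrs : (r * |Real.sin φ|) ^ 2 = r ^ 2 * (1 - Real.cos φ ^ 2) := by
    rw [mul_pow, sq_abs, Real.sin_sq]
  rw [hrs] at hle
  have hs2 : 0 < Real.sin φ ^ 2 :=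
    (sq_abs (Real.sin φ)) ▸ pow_pos habs 2
  have hc2 : Real.cos φ ^ 2 < 1 := by nlinarith [Real.sin_sq φ]
  rcases hbig with hb | hb
  · nlinarith [sq_nonneg (t₂ - t₁ * Real.cos φ),
      mul_pos (show (0:ℝ) < t₁ ^ 2 - r ^ 2 by nlinarith) (show (0:ℝ) < 1 - Real.cos φ ^ 2 by linarith)]
  · nlinarith [sq_nonneg (t₁ - t₂ * Real.cos φ),
      mul_pos (show (0:ℝ) < t₂ ^ 2 - r ^ 2 by nlinarith) (show (0:ℝ) < 1 - Real.cos φ ^ 2 by linarith)]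

/-- The set of angle differences for which the intersection is within distance `r`. -/
def Aset (r t₁ t₂ : ℝ) : Set ℝ :=
  {φ | Real.sqrt (t₁ ^ 2 + t₂ ^ 2 - 2 * t₁ * t₂ * Real.cos φ) / |Real.sin φ| ≤ r}

lemma Aset_measurable (r t₁ t₂ : ℝ) : MeasurableSet (Aset r t₁ t₂) := by
  apply measurableSet_le _ measurable_const
  fun_prop

lemma Aset_periodic (r t₁ t₂ φ : ℝ) : φ + 2 * π ∈ Aset r t₁ t₂ ↔ φ ∈ Aset r t₁ t₂ := by
  simp [Aset, Real.cos_add_two_pi, Real.sin_add_two_pi]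

lemma sin_ne_zero_of {φ : ℝ} (h0 : 0 < φ) (h2 : φ < 2 * π) (hπ : φ ≠ π) :
    Real.sin φ ≠ 0 := by
  rcases lt_or_gt_of_ne hπ with h | h
  · exact (Real.sin_pos_of_pos_of_lt_pi h0 h).ne'
  · have hp : 0 < Real.sin (φ - π) :=
      Real.sin_pos_of_pos_of_lt_pi (by linarith) (by linarith)
    have : Real.sin (φ - π) = -Real.sin φ := by
      rw [Real.sin_sub, Real.sin_pi, Real.cos_pi]; ring
    rw [this] at hp; intro hc; rw [hc] at hp; simp at hp

lemma pts_null : (volume : Measure ℝ) {0, π, 2 * π} = 0 :=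
  (Set.countable_insert.2 (Set.countable_insert.2 (Set.countable_singleton (2 * π)))).measure_zero volume

lemma vol_Aset_of_le {r t₁ t₂ : ℝ} (hr : 0 < r) (h1 : 0 ≤ t₁) (h1r : t₁ ≤ r)
    (h2 : 0 ≤ t₂) (h2r : t₂ ≤ r) :
    volume (Aset r t₁ t₂ ∩ Set.Ico 0 (2 * π)) =
      ENNReal.ofReal (4 * min (arccos (t₁ / r)) (arccos (t₂ / r))) := by
  set α := arccos (t₁ / r) with hα
  set β := arccos (t₂ / r) with hβ
  obtain ⟨hα0, hα2⟩ := arccos_mem hr h1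
  obtain ⟨hβ0, hβ2⟩ := arccos_mem hr h2
  have hπ : 0 < π := Real.pi_pos
  set d := |α - β| with hd
  set s := α + β with hs
  have hd0 : 0 ≤ d := abs_nonneg _
  have hds : d ≤ s := abs_le.2 ⟨by linarith, by linarith⟩
  have hsπ : s ≤ π := by rw [hs]; linarith
  have hset : (Aset r t₁ t₂ ∩ Set.Ico 0 (2 * π)) \ {0, π, 2 * π} =
      (Set.Icc d s ∪ Set.Icc (2 * π - s) (2 * π - d)) \ {0, π, 2 * π} := by
    ext φ
    simp only [Set.mem_diff, Set.mem_inter_iff, Set.mem_union, Set.mem_Icc, Set.mem_Ico,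
      Set.mem_insert_iff, Set.mem_singleton_iff, Aset, Set.mem_setOf_eq, not_or]
    constructor
    · rintro ⟨⟨hcond, h0, h2π⟩, hn0, hnπ, hn2π⟩
      refine ⟨?_, hn0, hnπ, hn2π⟩
      rcases lt_or_gt_of_ne hnπ with hlt | hgt
      · left
        exact (cond_iff hr h1 h1r h2 h2r (lt_of_le_of_ne h0 (Ne.symm hn0)) hlt).1 hcond
      · right
        have hcos : Real.cos (2 * π - φ) = Real.cos φ := by
          simp [Real.cos_sub, Real.cos_two_pi, Real.sin_two_pi]
        have hsin : |Real.sin (2 * π - φ)| = |Real.sin φ| := by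
          have : Real.sin (2 * π - φ) = -Real.sin φ := by
            simp [Real.sin_sub, Real.sin_two_pi, Real.cos_two_pi]
          rw [this, abs_neg]
        have hres := (cond_iff hr h1 h1r h2 h2r (show 0 < 2 * π - φ by
          rcases lt_or_eq_of_le (le_of_lt h2π) with h | h
          · linarith
          · exact absurd h hn2π.elim) (show 2 * π - φ < π by linarith)).1
          (by rw [hcos, hsin]; exact hcond)
        constructor <;> [linarith [hres.2]; linarith [hres.1]]
    · rintro ⟨hmem, hn0, hnπ, hn2π⟩
      rcases hmem with ⟨hd', hs'⟩ | ⟨hd', hs'⟩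
      · have h0 : 0 < φ := lt_of_le_of_ne (hd0.trans hd') (Ne.symm hn0)
        have hπ' : φ < π := lt_of_le_of_ne (hs'.trans hsπ) hnπ
        exact ⟨⟨(cond_iff hr h1 h1r h2 h2r h0 hπ').2 ⟨hd', hs'⟩, by linarith, by linarith⟩,
          hn0, hnπ, hn2π⟩
      · have hπ' : π < φ := lt_of_le_of_ne (by linarith) (Ne.symm hnπ)
        have h2π' : φ < 2 * π := lt_of_le_of_ne (by linarith) hn2π
        have hcos : Real.cos (2 * π - φ) = Real.cos φ := by
          simp [Real.cos_sub, Real.cos_two_pi, Real.sin_two_pi]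
        have hsin : |Real.sin (2 * π - φ)| = |Real.sin φ| := by
          have : Real.sin (2 * π - φ) = -Real.sin φ := by
            simp [Real.sin_sub, Real.sin_two_pi, Real.cos_two_pi]
          rw [this, abs_neg]
        have hres := (cond_iff hr h1 h1r h2 h2r (show 0 < 2 * π - φ by linarith)
          (show 2 * π - φ < π by linarith)).2 ⟨by rw [abs_le]; constructor <;> linarith [abs_le.1 (le_refl |α - β|)], by linarith⟩
        rw [hcos, hsin] at hres
        exact ⟨⟨hres, by linarith, by linarith⟩, hn0, hnπ, hn2π⟩
  have hdisj : Disjoint (Set.Icc d s) (Set.Ioc (2 * π - s) (2 * π - d)) := by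
    rw [Set.disjoint_left]
    rintro x ⟨_, hx2⟩ ⟨hx3, _⟩
    linarith
  have hae : (Set.Icc d s ∪ Set.Ioc (2 * π - s) (2 * π - d) : Set ℝ) =ᵐ[volume]
      (Set.Icc d s ∪ Set.Icc (2 * π - s) (2 * π - d) : Set ℝ) :=
    Filter.EventuallyEq.union (Filter.EventuallyEq.refl _ _) Ioc_ae_eq_Icc
  calc volume (Aset r t₁ t₂ ∩ Set.Ico 0 (2 * π))
      = volume ((Aset r t₁ t₂ ∩ Set.Ico 0 (2 * π)) \ {0, π, 2 * π}) :=
        (measure_diff_null pts_null).symm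
    _ = volume ((Set.Icc d s ∪ Set.Icc (2 * π - s) (2 * π - d)) \ {0, π, 2 * π}) := by
        rw [hset]
    _ = volume (Set.Icc d s ∪ Set.Icc (2 * π - s) (2 * π - d)) := measure_diff_null pts_null
    _ = volume (Set.Icc d s ∪ Set.Ioc (2 * π - s) (2 * π - d)) := (measure_congr hae).symm
    _ = ENNReal.ofReal (s - d) + ENNReal.ofReal ((2 * π - d) - (2 * π - s)) := by
        rw [measure_union hdisj measurableSet_Ioc, Real.volume_Icc, Real.volume_Ioc]
    _ = ENNReal.ofReal (4 * min α β) := by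
        rw [← ENNReal.ofReal_add (by linarith) (by linarith)]
        congr 1
        rcases le_total α β with h | h
        · rw [min_eq_left h, hd, abs_of_nonpos (by linarith)]; ring
        · rw [min_eq_right h, hd, abs_of_nonneg (by linarith)]; ring

lemma vol_Aset_of_big {r t₁ t₂ : ℝ} (hr : 0 < r) (h1 : 0 ≤ t₁) (h2 : 0 ≤ t₂)
    (hbig : r < t₁ ∨ r < t₂) :
    volume (Aset r t₁ t₂ ∩ Set.Ico 0 (2 * π)) = 0 := by
  apply measure_mono_null _ pts_null
  rintro φ ⟨hc, h0, h2π⟩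
  simp only [Set.mem_insert_iff, Set.mem_singleton_iff]
  by_contra hn
  push_neg at hn
  obtain ⟨hn0, hnπ, _⟩ := hn
  have h0' : 0 < φ := lt_of_le_of_ne h0 (Ne.symm hn0)
  exact cond_not hr h1 h2 hbig (sin_ne_zero_of h0' h2π hnπ) hc

lemma twoPiPos : (0 : ℝ) < 2 * π := by positivity
lemma ofReal_two_pi_ne_zero : ENNReal.ofReal (2 * π) ≠ 0 :=
  (ENNReal.ofReal_pos.2 twoPiPos).ne'

instance : IsProbabilityMeasure unifCircle := by
  constructor
  rw [unifCircle, Measure.smul_apply, Measure.restrict_apply MeasurableSet.univ,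
    Set.univ_inter, Real.volume_Ico, sub_zero, smul_eq_mul]
  exact ENNReal.inv_mul_cancel ofReal_two_pi_ne_zero ENNReal.ofReal_ne_top

lemma vol_shift {A : Set ℝ} (hA : MeasurableSet A)
    (hper : ∀ x, x + 2 * π ∈ A ↔ x ∈ A) {θ : ℝ} (hθ : θ ∈ Set.Ico 0 (2 * π)) :
    volume ({x : ℝ | x - θ ∈ A} ∩ Set.Ico 0 (2 * π)) = volume (A ∩ Set.Ico 0 (2 * π)) := by
  obtain ⟨hθ0, hθ2⟩ := hθ
  have hπ := twoPiPos
  set B := {x : ℝ | x - θ ∈ A} with hB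
  have hBmeas : MeasurableSet B := (measurable_id.sub measurable_const) hA
  have piece1 : B ∩ Set.Ico θ (2 * π) =
      (fun x : ℝ => -θ + x) ⁻¹' (A ∩ Set.Ico 0 (2 * π - θ)) := by
    ext x
    simp only [hB, Set.mem_inter_iff, Set.mem_Ico, Set.mem_setOf_eq, Set.mem_preimage]
    constructor
    · rintro ⟨hxA, hx1, hx2⟩
      exact ⟨by rwa [show -θ + x = x - θ by ring], by linarith, by linarith⟩
    · rintro ⟨hxA, hx1, hx2⟩
      exact ⟨by rwa [show -θ + x = x - θ by ring] at hxA, by linarith, by linarith⟩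
  have piece2 : B ∩ Set.Ico 0 θ =
      (fun x : ℝ => (2 * π - θ) + x) ⁻¹' (A ∩ Set.Ico (2 * π - θ) (2 * π)) := by
    ext x
    simp only [hB, Set.mem_inter_iff, Set.mem_Ico, Set.mem_setOf_eq, Set.mem_preimage]
    constructor
    · rintro ⟨hxA, hx1, hx2⟩
      refine ⟨?_, by linarith, by linarith⟩
      rw [show (2 * π - θ) + x = (x - θ) + 2 * π by ring, hper]
      exact hxA
    · rintro ⟨hxA, hx1, hx2⟩
      rw [show (2 * π - θ) + x = (x - θ) + 2 * π by ring, hper] at hxA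
      exact ⟨hxA, by linarith, by linarith⟩
  have hsplit : Set.Ico (0 : ℝ) (2 * π) = Set.Ico 0 θ ∪ Set.Ico θ (2 * π) :=
    (Set.Ico_union_Ico_eq_Ico hθ0 hθ2.le).symm
  have hdisj : Disjoint (B ∩ Set.Ico 0 θ) (B ∩ Set.Ico θ (2 * π)) := by
    apply Set.disjoint_left.2
    rintro x ⟨_, _, hx2⟩ ⟨_, hx3, _⟩
    linarith
  have hsplit2 : Set.Ico (0 : ℝ) (2 * π) =
      Set.Ico 0 (2 * π - θ) ∪ Set.Ico (2 * π - θ) (2 * π) :=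
    (Set.Ico_union_Ico_eq_Ico (by linarith) (by linarith)).symm
  have hdisj2 : Disjoint (A ∩ Set.Ico 0 (2 * π - θ)) (A ∩ Set.Ico (2 * π - θ) (2 * π)) := by
    apply Set.disjoint_left.2
    rintro x ⟨_, _, hx2⟩ ⟨_, hx3, _⟩
    linarith
  calc volume (B ∩ Set.Ico 0 (2 * π))
      = volume ((B ∩ Set.Ico 0 θ) ∪ (B ∩ Set.Ico θ (2 * π))) := by
        rw [hsplit, Set.inter_union_distrib_left]
    _ = volume (B ∩ Set.Ico 0 θ) + volume (B ∩ Set.Ico θ (2 * π)) :=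
        measure_union hdisj (hBmeas.inter measurableSet_Ico)
    _ = volume (A ∩ Set.Ico (2 * π - θ) (2 * π)) + volume (A ∩ Set.Ico 0 (2 * π - θ)) := by
        rw [piece1, piece2, measure_preimage_add, measure_preimage_add]
    _ = volume (A ∩ Set.Ico 0 (2 * π)) := by
        rw [add_comm, ← measure_union hdisj2 (hA.inter measurableSet_Ico),
          ← Set.inter_union_distrib_left, ← hsplit2]

lemma circle_prod {A : Set ℝ} (hA : MeasurableSet A)
    (hper : ∀ x, x + 2 * π ∈ A ↔ x ∈ A) :
    (unifCircle.prod unifCircle) {p : ℝ × ℝ | p.2 - p.1 ∈ A} =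
      (ENNReal.ofReal (2 * π))⁻¹ * volume (A ∩ Set.Ico 0 (2 * π)) := by
  have hS : MeasurableSet {p : ℝ × ℝ | p.2 - p.1 ∈ A} :=
    (measurable_snd.sub measurable_fst) hA
  rw [Measure.prod_apply hS]
  have hval : ∀ θ ∈ Set.Ico (0:ℝ) (2 * π),
      unifCircle (Prod.mk θ ⁻¹' {p : ℝ × ℝ | p.2 - p.1 ∈ A}) =
        (ENNReal.ofReal (2 * π))⁻¹ * volume (A ∩ Set.Ico 0 (2 * π)) := by
    intro θ hθ
    have hpre : Prod.mk θ ⁻¹' {p : ℝ × ℝ | p.2 - p.1 ∈ A} = {x : ℝ | x - θ ∈ A} := rfl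
    rw [hpre, unifCircle, Measure.smul_apply,
      Measure.restrict_apply (show MeasurableSet {x : ℝ | x - θ ∈ A} from
        (measurable_id.sub measurable_const) hA), smul_eq_mul, vol_shift hA hper hθ]
  have hae : ∀ᵐ θ ∂unifCircle, unifCircle (Prod.mk θ ⁻¹' {p : ℝ × ℝ | p.2 - p.1 ∈ A}) =
      (ENNReal.ofReal (2 * π))⁻¹ * volume (A ∩ Set.Ico 0 (2 * π)) := by
    rw [unifCircle]
    exact Measure.ae_smul_measure ((ae_restrict_iff' measurableSet_Ico).2
      (Filter.Eventually.of_forall hval)) _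
  rw [lintegral_congr_ae hae, lintegral_const, measure_univ, mul_one]

lemma inner_measure {r t₁ t₂ : ℝ} (hr : 0 < r) (h1 : 0 ≤ t₁) (h2 : 0 ≤ t₂) :
    (unifCircle.prod unifCircle) {p : ℝ × ℝ | interDist t₁ t₂ p.1 p.2 ≤ r} =
      (ENNReal.ofReal (2 * π))⁻¹ *
        Set.indicator (Set.Icc 0 r) (fun t => ENNReal.ofReal (4 * arccos (t / r)))
          (max t₁ t₂) := by
  have hset : {p : ℝ × ℝ | interDist t₁ t₂ p.1 p.2 ≤ r} =
      {p : ℝ × ℝ | p.2 - p.1 ∈ Aset r t₁ t₂} := rfl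
  rw [hset, circle_prod (Aset_measurable r t₁ t₂) (Aset_periodic r t₁ t₂)]
  rcases le_or_gt (max t₁ t₂) r with hle | hgt
  · have h1r : t₁ ≤ r := le_trans (le_max_left _ _) hle
    have h2r : t₂ ≤ r := le_trans (le_max_right _ _) hle
    rw [vol_Aset_of_le hr h1 h1r h2 h2r,
      Set.indicator_of_mem (Set.mem_Icc.2 ⟨le_max_iff.2 (Or.inl h1), hle⟩)]
    congr 2
    have hm1 : t₁ / r ∈ Set.Icc (-1 : ℝ) 1 :=
      ⟨le_trans (show (-1:ℝ) ≤ 0 by norm_num) (by positivity), (div_le_one hr).2 h1r⟩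
    have hm2 : t₂ / r ∈ Set.Icc (-1 : ℝ) 1 :=
      ⟨le_trans (show (-1:ℝ) ≤ 0 by norm_num) (by positivity), (div_le_one hr).2 h2r⟩
    rcases le_total t₁ t₂ with h | h
    · rw [max_eq_right h, min_eq_right]
      exact (Real.strictAntiOn_arccos.le_iff_ge hm2 hm1).2 (by gcongr)
    · rw [max_eq_left h, min_eq_left]
      exact (Real.strictAntiOn_arccos.le_iff_ge hm1 hm2).2 (by gcongr)
  · rw [vol_Aset_of_big hr h1 h2 (lt_max_iff.1 hgt),
      Set.indicator_of_notMem (fun hm => absurd hm.2 (not_le.2 hgt)), mul_zero]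

lemma measurable_iic (μ : Measure ℝ) : Measurable (fun t => μ (Set.Iic t)) :=
  Monotone.measurable (fun a b hab => measure_mono (Set.Iic_subset_Iic.2 hab))

lemma lintegral_max (μ : Measure ℝ) [IsProbabilityMeasure μ] [NullSingletonClass μ]
    {Φ : ℝ → ℝ≥0∞} (hΦ : Measurable Φ) :
    ∫⁻ t₁, ∫⁻ t₂, Φ (max t₁ t₂) ∂μ ∂μ = 2 * ∫⁻ t, Φ t * μ (Set.Iic t) ∂μ := by
  have hsplit : ∀ t₁ t₂ : ℝ, Φ (max t₁ t₂) =
      Set.indicator (Set.Iic t₁) (fun _ => Φ t₁) t₂ + Set.indicator (Set.Ioi t₁) Φ t₂ := by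
    intro t₁ t₂
    rcases le_or_gt t₂ t₁ with h | h
    · rw [max_eq_left h, Set.indicator_of_mem (Set.mem_Iic.2 h), Set.indicator_of_notMem (by
        simp only [Set.mem_Ioi, not_lt]; exact h), add_zero]
    · rw [max_eq_right h.le, Set.indicator_of_notMem (by
        simp only [Set.mem_Iic, not_le]; exact h), Set.indicator_of_mem (Set.mem_Ioi.2 h),
        zero_add]
  have step1 : ∫⁻ t₁, ∫⁻ t₂, Φ (max t₁ t₂) ∂μ ∂μ =
      ∫⁻ t₁, (Φ t₁ * μ (Set.Iic t₁) + ∫⁻ t₂, Set.indicator (Set.Ioi t₁) Φ t₂ ∂μ) ∂μ := by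
    apply lintegral_congr
    intro t₁
    rw [show (fun t₂ => Φ (max t₁ t₂)) = fun t₂ =>
      Set.indicator (Set.Iic t₁) (fun _ => Φ t₁) t₂ + Set.indicator (Set.Ioi t₁) Φ t₂ from
      funext (hsplit t₁)]
    rw [lintegral_add_left (measurable_const.indicator measurableSet_Iic),
      lintegral_indicator measurableSet_Iic, setLIntegral_const]
  rw [step1, lintegral_add_left (f := fun t => Φ t * μ (Set.Iic t)) (hΦ.mul (measurable_iic μ))]
  have swap : ∫⁻ t₁, ∫⁻ t₂, Set.indicator (Set.Ioi t₁) Φ t₂ ∂μ ∂μ =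
      ∫⁻ t, Φ t * μ (Set.Iic t) ∂μ := by
    have hswap := lintegral_lintegral_swap (μ := μ) (ν := μ)
      (f := fun t₁ t₂ => Set.indicator (Set.Ioi t₁) Φ t₂) ?_
    · rw [hswap]
      apply lintegral_congr
      intro t₂
      have : (fun t₁ => Set.indicator (Set.Ioi t₁) Φ t₂) =
          Set.indicator (Set.Iio t₂) (fun _ => Φ t₂) := by
        funext t₁
        rcases lt_or_ge t₁ t₂ with h | h
        · rw [Set.indicator_of_mem (Set.mem_Ioi.2 h), Set.indicator_of_mem (Set.mem_Iio.2 h)]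
        · rw [Set.indicator_of_notMem (by simp only [Set.mem_Ioi, not_lt]; exact h),
            Set.indicator_of_notMem (by simp only [Set.mem_Iio, not_lt]; exact h)]
      rw [this, lintegral_indicator measurableSet_Iio, setLIntegral_const,
        measure_congr Iio_ae_eq_Iic]
    · have : Function.uncurry (fun t₁ t₂ => Set.indicator (Set.Ioi t₁) Φ t₂) =
          Set.indicator {p : ℝ × ℝ | p.1 < p.2} (fun p => Φ p.2) := by
        funext p
        rcases lt_or_ge p.1 p.2 with h | h
        · rw [Function.uncurry, Set.indicator_of_mem (show p ∈ {q : ℝ × ℝ | q.1 < q.2} from h)]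
          exact Set.indicator_of_mem (Set.mem_Ioi.2 h) Φ
        · rw [Function.uncurry,
            Set.indicator_of_notMem (show p ∉ {q : ℝ × ℝ | q.1 < q.2} from not_lt.2 h)]
          exact Set.indicator_of_notMem (by simp only [Set.mem_Ioi, not_lt]; exact h) Φ
      rw [this]
      exact ((hΦ.comp measurable_snd).indicator
        (measurableSet_lt measurable_fst measurable_snd)).aemeasurable
  rw [swap, two_mul]

theorem intersection_distance_general (μ : Measure ℝ) [IsProbabilityMeasure μ]
    [NullSingletonClass μ] (hsupp : μ (Set.Iio 0) = 0) (r : ℝ) (hr : 0 < r) :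
    (μ.prod (μ.prod (unifCircle.prod unifCircle)))
      {q : ℝ × ℝ × ℝ × ℝ | interDist q.1 q.2.1 q.2.2.1 q.2.2.2 ≤ r} =
    ENNReal.ofReal (4 / π *
      ∫ t in Set.Icc 0 r, (μ (Set.Icc 0 t)).toReal * Real.arccos (t / r) ∂μ) := by
  have hπ : 0 < π := Real.pi_pos
  set C := (ENNReal.ofReal (2 * π))⁻¹ with hC
  set Φ : ℝ → ℝ≥0∞ :=
    Set.indicator (Set.Icc 0 r) (fun t => ENNReal.ofReal (4 * arccos (t / r))) with hΦdef
  have harc : Measurable fun t : ℝ => 4 * arccos (t / r) :=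
    (continuous_const.mul
      (Real.continuous_arccos.comp (continuous_id.div_const r))).measurable
  have hΦ : Measurable Φ :=
    (ENNReal.measurable_ofReal.comp harc).indicator measurableSet_Icc
  have hDmeas : Measurable (fun q : ℝ × ℝ × ℝ × ℝ =>
      interDist q.1 q.2.1 q.2.2.1 q.2.2.2) := by
    unfold interDist; fun_prop
  have hS : MeasurableSet {q : ℝ × ℝ × ℝ × ℝ | interDist q.1 q.2.1 q.2.2.1 q.2.2.2 ≤ r} :=
    measurableSet_le hDmeas measurable_const
  have hae : ∀ᵐ t : ℝ ∂μ, 0 ≤ t := by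
    have hset : {t : ℝ | ¬ 0 ≤ t} = Set.Iio 0 := by ext t; simp [not_le]
    rw [ae_iff, hset]; exact hsupp
  rw [Measure.prod_apply hS]
  have key : ∀ᵐ t₁ ∂μ, (μ.prod (unifCircle.prod unifCircle))
      (Prod.mk t₁ ⁻¹' {q : ℝ × ℝ × ℝ × ℝ | interDist q.1 q.2.1 q.2.2.1 q.2.2.2 ≤ r}) =
      ∫⁻ t₂, C * Φ (max t₁ t₂) ∂μ := by
    filter_upwards [hae] with t₁ ht₁
    rw [Measure.prod_apply (measurable_prodMk_left hS)]
    apply lintegral_congr_ae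
    filter_upwards [hae] with t₂ ht₂
    exact inner_measure hr ht₁ ht₂
  rw [lintegral_congr_ae key]
  have hmax : ∀ t₁ : ℝ, Measurable fun t₂ => Φ (max t₁ t₂) :=
    fun t₁ => hΦ.comp (measurable_const.max measurable_id)
  have step2 : ∀ t₁ : ℝ, ∫⁻ t₂, C * Φ (max t₁ t₂) ∂μ = C * ∫⁻ t₂, Φ (max t₁ t₂) ∂μ :=
    fun t₁ => lintegral_const_mul C (hmax t₁)
  rw [lintegral_congr step2,
    lintegral_const_mul C (Measurable.lintegral_prod_right
      (f := fun t₁ t₂ => Φ (max t₁ t₂))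
      (show Measurable fun p : ℝ × ℝ => Φ (max p.1 p.2) from
        hΦ.comp (measurable_fst.max measurable_snd))), lintegral_max μ hΦ]
  -- compute the remaining lintegral
  have hIic : ∀ t : ℝ, 0 ≤ t → μ (Set.Iic t) = μ (Set.Icc 0 t) := by
    intro t ht
    have hun : Set.Iic t = Set.Icc 0 t ∪ Set.Iio 0 := by
      ext x
      simp only [Set.mem_Iic, Set.mem_union, Set.mem_Icc, Set.mem_Iio]
      constructor
      · intro hx; rcases le_or_gt 0 x with h | h
        · exact Or.inl ⟨h, hx⟩
        · exact Or.inr h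
      · rintro (⟨_, hx⟩ | hx) <;> linarith
    rw [hun]
    refine le_antisymm (le_trans (measure_union_le _ _) ?_) (measure_mono Set.subset_union_left)
    rw [hsupp, add_zero]
  have hJ : ∫⁻ t, Φ t * μ (Set.Iic t) ∂μ =
      ∫⁻ t in Set.Icc 0 r, ENNReal.ofReal
        (4 * arccos (t / r) * (μ (Set.Icc 0 t)).toReal) ∂μ := by
    rw [hΦdef]
    rw [show (fun t => (Set.Icc 0 r).indicator
        (fun t => ENNReal.ofReal (4 * arccos (t / r))) t * μ (Set.Iic t)) =
        Set.indicator (Set.Icc 0 r)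
          (fun t => ENNReal.ofReal (4 * arccos (t / r)) * μ (Set.Iic t)) from
      funext fun t => (Set.indicator_mul_left (Set.Icc 0 r)
        (fun t => ENNReal.ofReal (4 * arccos (t / r))) (fun t => μ (Set.Iic t))).symm]
    rw [lintegral_indicator measurableSet_Icc]
    apply setLIntegral_congr_fun measurableSet_Icc
    intro t ht
    beta_reduce
    rw [hIic t ht.1, ← ENNReal.ofReal_toReal (measure_ne_top μ (Set.Icc 0 t)),
      ← ENNReal.ofReal_mul (mul_nonneg (by norm_num) (Real.arccos_nonneg _)),
      ENNReal.ofReal_toReal (measure_ne_top μ _)]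
  rw [hJ]
  -- convert to a Bochner integral
  have hmono : Monotone fun t => (μ (Set.Icc 0 t)).toReal := fun a b hab =>
    ENNReal.toReal_mono (measure_ne_top μ _) (measure_mono (Set.Icc_subset_Icc_right hab))
  have hmeasf : Measurable fun t => 4 * arccos (t / r) * (μ (Set.Icc 0 t)).toReal :=
    harc.mul hmono.measurable
  have hbound : ∀ t : ℝ, ‖4 * arccos (t / r) * (μ (Set.Icc 0 t)).toReal‖ ≤ 4 * π := by
    intro t
    have h1 : 0 ≤ arccos (t / r) := Real.arccos_nonneg _
    have h2 : arccos (t / r) ≤ π := Real.arccos_le_pi _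
    have h3 : (μ (Set.Icc 0 t)).toReal ≤ 1 := by
      have := prob_le_one (μ := μ) (s := Set.Icc 0 t)
      calc (μ (Set.Icc 0 t)).toReal ≤ (1 : ℝ≥0∞).toReal :=
            ENNReal.toReal_mono (by simp) this
        _ = 1 := by simp
    have h4 : 0 ≤ (μ (Set.Icc 0 t)).toReal := ENNReal.toReal_nonneg
    rw [Real.norm_eq_abs, abs_of_nonneg (by positivity)]
    nlinarith
  have hint : Integrable (fun t => 4 * arccos (t / r) * (μ (Set.Icc 0 t)).toReal)
      (μ.restrict (Set.Icc 0 r)) := by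
    apply Integrable.mono' (integrable_const (4 * π)) hmeasf.aestronglyMeasurable
    exact Filter.Eventually.of_forall hbound
  rw [← ofReal_integral_eq_lintegral_ofReal hint (Filter.Eventually.of_forall (fun t =>
    mul_nonneg (mul_nonneg (by norm_num) (Real.arccos_nonneg _)) ENNReal.toReal_nonneg))]
  -- final arithmetic
  set I := ∫ t in Set.Icc 0 r, (μ (Set.Icc 0 t)).toReal * arccos (t / r) ∂μ with hI
  have hI' : ∫ t in Set.Icc 0 r, 4 * arccos (t / r) * (μ (Set.Icc 0 t)).toReal ∂μ = 4 * I := by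
    rw [hI, ← integral_const_mul]
    exact integral_congr_ae (Filter.Eventually.of_forall fun t => by ring)
  have hI0 : 0 ≤ I := by
    apply integral_nonneg
    intro t
    exact mul_nonneg ENNReal.toReal_nonneg (Real.arccos_nonneg _)
  rw [hI']
  rw [show (2 : ℝ≥0∞) = ENNReal.ofReal 2 by simp, ← ENNReal.ofReal_mul (by norm_num),
    hC, mul_comm ((ENNReal.ofReal (2 * π))⁻¹), ← div_eq_mul_inv,
    ← ENNReal.ofReal_div_of_pos twoPiPos]
  congr 1
  field_simp
end

section
/- Let r > 0 and let 0 ≤ t₁ ≤ t₂ ≤ r with t₂ > 0. Then (1/(4π²)) times the two-dimensional Lebesgue measure of the set {(θ₁,θ₂) ∈ [0,2π)² : D(t₁,t₂,θ₁,θ₂) ≤ r} equals (2/π)·arccos(t₂/r). -/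
open MeasureTheory Real

lemma aux_mul_nonpos_iff_pos_left {c x : ℝ} (h : 0 < c) : c * x ≤ 0 ↔ x ≤ 0 := by
  constructor <;> intro h' <;> nlinarith

lemma aux_quad_iff {u v c : ℝ} (huv : u ≤ v) : (c - u) * (c - v) ≤ 0 ↔ u ≤ c ∧ c ≤ v := by
  constructor
  · intro h
    constructor
    · by_contra hc; push_neg at hc; nlinarith
    · by_contra hc; push_neg at hc; nlinarith
  · rintro ⟨h1, h2⟩; nlinarith

lemma aux_cond_iff (r t₁ t₂ : ℝ) (hr : 0 < r)
    (ht₁ : 0 ≤ t₁) (h₁₂ : t₁ ≤ t₂) (h₂r : t₂ ≤ r) (ht₂ : 0 < t₂)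
    {φ : ℝ} (h0 : 0 < φ) (hπ : φ < π) :
    interDist t₁ t₂ 0 φ ≤ r ↔
      arccos (t₁/r) - arccos (t₂/r) ≤ φ ∧ φ ≤ arccos (t₁/r) + arccos (t₂/r) := by
  set a := arccos (t₁/r) with ha
  set b := arccos (t₂/r) with hb
  have h1r : t₁/r ≤ 1 := by rw [div_le_one hr]; linarith
  have h2r' : t₂/r ≤ 1 := by rw [div_le_one hr]; linarith
  have h1m : (-1:ℝ) ≤ t₁/r := by nlinarith [div_nonneg ht₁ hr.le]
  have h2m : (-1:ℝ) ≤ t₂/r := by nlinarith [div_nonneg ht₂.le hr.le]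
  have hca : cos a = t₁/r := cos_arccos h1m h1r
  have hcb : cos b = t₂/r := cos_arccos h2m h2r'
  have ht1 : t₁ = r * cos a := by rw [hca, mul_div_assoc', mul_div_cancel_left₀ _ hr.ne']
  have ht2 : t₂ = r * cos b := by rw [hcb, mul_div_assoc', mul_div_cancel_left₀ _ hr.ne']
  have hsa : sin a ^ 2 = 1 - cos a ^ 2 := by rw [sin_sq]
  have hsb : sin b ^ 2 = 1 - cos b ^ 2 := by rw [sin_sq]
  have ha_mem : a ∈ Set.Icc 0 π := ⟨arccos_nonneg _, arccos_le_pi _⟩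
  have hb_mem : b ∈ Set.Icc 0 π := ⟨arccos_nonneg _, arccos_le_pi _⟩
  have hsa0 : 0 ≤ sin a := sin_nonneg_of_nonneg_of_le_pi ha_mem.1 ha_mem.2
  have hsb0 : 0 ≤ sin b := sin_nonneg_of_nonneg_of_le_pi hb_mem.1 hb_mem.2
  have hba : b ≤ a :=
    (strictAntiOn_cos.le_iff_ge ha_mem hb_mem).mp (by rw [hca, hcb]; gcongr)
  have ha2 : a ≤ π/2 := arccos_le_pi_div_two.mpr (div_nonneg ht₁ hr.le)
  have hb2 : b < π/2 := arccos_lt_pi_div_two.mpr (div_pos ht₂ hr)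
  have habπ : a + b < π := by linarith
  have hsφ : 0 < sin φ := sin_pos_of_pos_of_lt_pi h0 hπ
  have hQ : 0 ≤ t₁ ^ 2 + t₂ ^ 2 - 2 * t₁ * t₂ * cos φ := by
    nlinarith [cos_le_one φ, neg_one_le_cos φ, sq_nonneg (t₁ - t₂), sq_nonneg (t₁ + t₂)]
  have huv : cos (a + b) ≤ cos (a - b) := by
    rw [cos_add, cos_sub]; nlinarith [mul_nonneg hsa0 hsb0]
  have key : t₁ ^ 2 + t₂ ^ 2 - 2 * t₁ * t₂ * cos φ - r ^ 2 * sin φ ^ 2 =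
      r ^ 2 * ((cos φ - cos (a + b)) * (cos φ - cos (a - b))) := by
    rw [cos_add, cos_sub, ht1, ht2, sin_sq]
    linear_combination (r^2 * sin b ^ 2) * hsa + (r^2 * (1 - cos a ^ 2)) * hsb
  have step1 : interDist t₁ t₂ 0 φ ≤ r ↔
      t₁ ^ 2 + t₂ ^ 2 - 2 * t₁ * t₂ * cos φ ≤ r ^ 2 * sin φ ^ 2 := by
    rw [interDist, sub_zero, abs_of_pos hsφ, div_le_iff₀ hsφ, Real.sqrt_le_iff,
      show r ^ 2 * sin φ ^ 2 = (r * sin φ) ^ 2 by ring]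
    simp only [and_iff_right (by positivity : (0:ℝ) ≤ r * sin φ)]
  have hr2 : (0:ℝ) < r ^ 2 := by positivity
  have hiff : t₁ ^ 2 + t₂ ^ 2 - 2 * t₁ * t₂ * cos φ ≤ r ^ 2 * sin φ ^ 2 ↔
      (cos φ - cos (a + b)) * (cos φ - cos (a - b)) ≤ 0 := by
    rw [← sub_nonpos, key]
    exact aux_mul_nonpos_iff_pos_left hr2
  have hφ_mem : φ ∈ Set.Icc 0 π := ⟨h0.le, hπ.le⟩
  have hab_mem : a + b ∈ Set.Icc 0 π := ⟨by linarith [ha_mem.1, hb_mem.1], habπ.le⟩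
  have hamb_mem : a - b ∈ Set.Icc 0 π := ⟨by linarith, by linarith [ha_mem.2, hb_mem.1]⟩
  rw [step1, hiff, aux_quad_iff huv]
  constructor
  · rintro ⟨h1, h2⟩
    exact ⟨(strictAntiOn_cos.le_iff_ge hφ_mem hamb_mem).mp h2,
      (strictAntiOn_cos.le_iff_ge hab_mem hφ_mem).mp h1⟩
  · rintro ⟨h1, h2⟩
    exact ⟨(strictAntiOn_cos.le_iff_ge hab_mem hφ_mem).mpr h2,
      (strictAntiOn_cos.le_iff_ge hφ_mem hamb_mem).mpr h1⟩

lemma aux_reflect (t₁ t₂ φ : ℝ) : interDist t₁ t₂ 0 (2*π - φ) = interDist t₁ t₂ 0 φ := by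
  simp [interDist, Real.cos_two_pi_sub, Real.sin_two_pi_sub]

lemma aux_periodic (t₁ t₂ : ℝ) : Function.Periodic (fun φ => interDist t₁ t₂ 0 φ) (2*π) := by
  intro x
  simp [interDist, Real.cos_add_two_pi, Real.sin_add_two_pi]

lemma aux_measurable (t₁ t₂ : ℝ) : Measurable (fun φ => interDist t₁ t₂ 0 φ) := by
  apply Measurable.div
  · exact (Real.continuous_sqrt.comp (by continuity)).measurable
  · exact (continuous_abs.comp (by continuity)).measurable

/-- measure of set intersected with Ico equals with Ioc -/
lemma aux_Ico_Ioc (s : Set ℝ) (c d : ℝ) :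
    volume (s ∩ Set.Ico c d) = volume (s ∩ Set.Ioc c d) := by
  have h1 : s ∩ Set.Ico c d ⊆ (s ∩ Set.Ioc c d) ∪ {c} := by
    rintro x ⟨hs, h1, h2⟩
    rcases eq_or_lt_of_le h1 with h | h
    · exact Or.inr (by simp [h.symm])
    · exact Or.inl ⟨hs, h, h2.le⟩
  have h2 : s ∩ Set.Ioc c d ⊆ (s ∩ Set.Ico c d) ∪ {d} := by
    rintro x ⟨hs, h1, h2⟩
    rcases eq_or_lt_of_le h2 with h | h
    · exact Or.inr (by simp [h])
    · exact Or.inl ⟨hs, h1.le, h⟩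
  apply le_antisymm
  · exact (measure_mono h1).trans ((measure_union_le _ _).trans (by simp))
  · exact (measure_mono h2).trans ((measure_union_le _ _).trans (by simp))

theorem conditional_angle_measure (r t₁ t₂ : ℝ) (hr : 0 < r)
    (ht₁ : 0 ≤ t₁) (h₁₂ : t₁ ≤ t₂) (h₂r : t₂ ≤ r) (ht₂ : 0 < t₂) :
    ENNReal.ofReal (1 / (4 * π ^ 2)) *
      (volume {p : ℝ × ℝ | p.1 ∈ Set.Ico 0 (2 * π) ∧ p.2 ∈ Set.Ico 0 (2 * π) ∧
        interDist t₁ t₂ p.1 p.2 ≤ r}) =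
    ENNReal.ofReal (2 / π * Real.arccos (t₂ / r)) := by
  set a := arccos (t₁/r) with ha
  set b := arccos (t₂/r) with hb
  set B : Set ℝ := {φ | interDist t₁ t₂ 0 φ ≤ r} with hBdef
  have hBmeas : MeasurableSet B := measurableSet_le (aux_measurable t₁ t₂) measurable_const
  have hdiff : ∀ θ₁ θ₂ : ℝ, interDist t₁ t₂ θ₁ θ₂ = interDist t₁ t₂ 0 (θ₂ - θ₁) := by
    intro θ₁ θ₂; simp [interDist]
  -- basic facts on a, b
  have h1r : t₁/r ≤ 1 := by rw [div_le_one hr]; linarith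
  have hba : b ≤ a := by
    have ha_mem : a ∈ Set.Icc 0 π := ⟨arccos_nonneg _, arccos_le_pi _⟩
    have hb_mem : b ∈ Set.Icc 0 π := ⟨arccos_nonneg _, arccos_le_pi _⟩
    refine (strictAntiOn_cos.le_iff_ge ha_mem hb_mem).mp ?_
    rw [ha, hb, cos_arccos (by nlinarith [div_nonneg ht₁ hr.le]) h1r,
      cos_arccos (by nlinarith [div_nonneg ht₂.le hr.le]) (by rw [div_le_one hr]; linarith)]
    gcongr
  have hbpos : 0 ≤ b := arccos_nonneg _
  have ha2 : a ≤ π/2 := arccos_le_pi_div_two.mpr (div_nonneg ht₁ hr.le)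
  have hb2 : b < π/2 := arccos_lt_pi_div_two.mpr (div_pos ht₂ hr)
  have habπ : a + b < π := by linarith
  -- the 1D measure over one period
  have h1D : volume (B ∩ Set.Ico 0 (2*π)) = ENNReal.ofReal (4 * b) := by
    set G : Set ℝ := Set.Icc (a-b) (a+b) ∪ Set.Icc (2*π-(a+b)) (2*π-(a-b)) with hG
    have hae : (B ∩ Set.Ico 0 (2*π) : Set ℝ) =ᵐ[volume] G := by
      rw [Filter.eventuallyEq_set]
      rw [MeasureTheory.ae_iff]
      refine measure_mono_null ?_
        ((Set.toFinite ({0, π, 2*π} : Set ℝ)).measure_zero volume)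
      intro φ hφ
      simp only [Set.mem_setOf_eq] at hφ
      by_contra hmem
      simp only [Set.mem_insert_iff, Set.mem_singleton_iff] at hmem
      push_neg at hmem
      obtain ⟨hφ0, hφπ, hφ2π⟩ := hmem
      apply hφ
      rcases lt_trichotomy φ 0 with h | h | h
      · -- φ < 0 : both sides false
        constructor
        · rintro ⟨_, h1, _⟩; linarith
        · rintro (⟨h1, _⟩ | ⟨h1, _⟩) <;> [linarith; nlinarith [pi_pos]]
      · exact absurd h hφ0
      rcases lt_trichotomy φ π with h' | h' | h'
      · -- 0 < φ < π
        have := aux_cond_iff r t₁ t₂ hr ht₁ h₁₂ h₂r ht₂ h h'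
        constructor
        · rintro ⟨hB, _⟩
          exact Or.inl (this.mp hB)
        · rintro (⟨h1, h2⟩ | ⟨h1, _⟩)
          · exact ⟨this.mpr ⟨h1, h2⟩, by constructor <;> nlinarith [pi_pos]⟩
          · exfalso; nlinarith
      · exact absurd h' hφπ
      rcases lt_trichotomy φ (2*π) with h'' | h'' | h''
      · -- π < φ < 2π
        have hψ0 : 0 < 2*π - φ := by linarith
        have hψπ : 2*π - φ < π := by linarith
        have := aux_cond_iff r t₁ t₂ hr ht₁ h₁₂ h₂r ht₂ hψ0 hψπ
        rw [aux_reflect t₁ t₂ φ] at this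
        constructor
        · rintro ⟨hB, _⟩
          refine Or.inr ?_
          obtain ⟨k1, k2⟩ := this.mp hB
          constructor <;> linarith
        · rintro (⟨_, h2⟩ | ⟨h1, h2⟩)
          · exfalso; linarith
          · exact ⟨this.mpr ⟨by linarith, by linarith⟩, by constructor <;> linarith⟩
      · exact absurd h'' hφ2π
      · -- φ > 2π : both sides false
        constructor
        · rintro ⟨_, _, h2⟩; linarith
        · rintro (⟨_, h2⟩ | ⟨_, h2⟩) <;> nlinarith
    rw [measure_congr hae, hG]
    rw [measure_union (by apply Set.disjoint_left.mpr; rintro x ⟨_, h1⟩ ⟨h2, _⟩; linarith)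
      measurableSet_Icc, Real.volume_Icc, Real.volume_Icc,
      show a + b - (a - b) = 2*b by ring, show 2*π-(a-b) - (2*π-(a+b)) = 2*b by ring,
      ← ENNReal.ofReal_add (by linarith) (by linarith)]
    congr 1; ring
  -- invariance of B under 2π translations
  have hper := aux_periodic t₁ t₂
  have hBinv : ∀ g : AddSubgroup.zmultiples (2*π), (fun x : ℝ => g +ᵥ x) ⁻¹' B = B := by
    rintro ⟨g, hg⟩
    obtain ⟨k, rfl⟩ := hg
    ext x
    show interDist t₁ t₂ 0 ((k • (2*π) : ℝ) + x) ≤ r ↔ interDist t₁ t₂ 0 x ≤ r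
    rw [show (k • (2*π) : ℝ) + x = x + (k : ℝ) * (2*π) by push_cast [zsmul_eq_mul]; ring]
    exact iff_of_eq (congrArg (· ≤ r) ((hper.int_mul k) x))
  have hBshift : ∀ c : ℝ, volume (B ∩ Set.Ioc c (c + 2*π)) = volume (B ∩ Set.Ioc 0 (0 + 2*π)) := by
    intro c
    exact MeasureTheory.IsAddFundamentalDomain.measure_set_eq
      (isAddFundamentalDomain_Ioc Real.two_pi_pos c)
      (isAddFundamentalDomain_Ioc Real.two_pi_pos 0) hBmeas hBinv
  have hslice : ∀ c : ℝ, volume (B ∩ Set.Ico c (c + 2*π)) = ENNReal.ofReal (4*b) := by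
    intro c
    rw [aux_Ico_Ioc, hBshift c, ← aux_Ico_Ioc, zero_add, h1D]
  set S := {p : ℝ × ℝ | p.1 ∈ Set.Ico 0 (2*π) ∧ p.2 ∈ Set.Ico 0 (2*π) ∧
      interDist t₁ t₂ p.1 p.2 ≤ r} with hS
  have hSeq : S = (Set.Ico 0 (2*π) ×ˢ Set.Ico 0 (2*π)) ∩
      ((fun p : ℝ × ℝ => p.2 - p.1) ⁻¹' B) := by
    ext p
    simp only [hS, Set.mem_setOf_eq, Set.mem_inter_iff, Set.mem_prod, Set.mem_preimage,
      hBdef, hdiff p.1 p.2]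
    tauto
  have hSmeas : MeasurableSet S := by
    rw [hSeq]
    exact (measurableSet_Ico.prod measurableSet_Ico).inter
      ((measurable_snd.sub measurable_fst) hBmeas)
  have hfib : ∀ x : ℝ, volume (Prod.mk x ⁻¹' S) =
      Set.indicator (Set.Ico 0 (2*π)) (fun _ => ENNReal.ofReal (4*b)) x := by
    intro x
    by_cases hx : x ∈ Set.Ico 0 (2*π)
    · rw [Set.indicator_of_mem hx]
      have hpre1 : Prod.mk x ⁻¹' S = Set.Ico 0 (2*π) ∩ {y : ℝ | y - x ∈ B} := by
        ext y
        simp only [hS, Set.mem_preimage, Set.mem_setOf_eq, Set.mem_inter_iff, hBdef,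
          hdiff x y]
        tauto
      rw [hpre1]
      have hpre : (fun z : ℝ => z + x) ⁻¹' (Set.Ico 0 (2*π) ∩ {y : ℝ | y - x ∈ B}) =
          B ∩ Set.Ico (-x) (-x + 2*π) := by
        ext z
        simp only [Set.mem_preimage, Set.mem_inter_iff, Set.mem_Ico, Set.mem_setOf_eq,
          add_sub_cancel_right]
        constructor
        · rintro ⟨⟨h1, h2⟩, h3⟩; exact ⟨h3, by linarith, by linarith⟩
        · rintro ⟨h3, h1, h2⟩; exact ⟨⟨by linarith, by linarith⟩, h3⟩
      rw [← measure_preimage_add_right volume x, hpre, hslice (-x)]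
    · rw [Set.indicator_of_notMem hx]
      have hempty : Prod.mk x ⁻¹' S = ∅ := by
        ext y
        simp only [hS, Set.mem_preimage, Set.mem_setOf_eq, Set.mem_empty_iff_false,
          iff_false]
        rintro ⟨h1, _, _⟩; exact hx h1
      simp [hempty]
  rw [MeasureTheory.Measure.volume_eq_prod ℝ ℝ, MeasureTheory.Measure.prod_apply hSmeas]
  rw [lintegral_congr hfib, lintegral_indicator measurableSet_Ico, setLIntegral_const,
    Real.volume_Ico, sub_zero]
  rw [← ENNReal.ofReal_mul (by linarith), ← ENNReal.ofReal_mul (by positivity)]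
  congr 1
  have hπ : (π:ℝ) ≠ 0 := pi_ne_zero
  rw [hb]
  field_simp
end

section
/- Let μ_I be the uniform probability measure on [0,1] and let ν be the uniform probability measure on [0,2π). Then for every r ≥ 1, the measure of the set {(t₁,t₂,θ₁,θ₂) : D(t₁,t₂,θ₁,θ₂) ≤ r} with respect to μ_I ⊗ μ_I ⊗ ν ⊗ ν equals (2/π)·arccos(1/r) + (r²/π)·arcsin(1/r) − (1/π)·sqrt(r² − 1). -/
open MeasureTheory Real
open scoped ENNReal

/-- Uniform probability measure on `[0, 1]` (Bertrand's "uniform radius" chord). -/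
noncomputable def unifRadius : Measure ℝ := volume.restrict (Set.Icc 0 1)


lemma arccos_anti {x y : ℝ} (h : x ≤ y) : Real.arccos y ≤ Real.arccos x := by
  simp only [Real.arccos_eq_pi_div_two_sub_arcsin]
  have := Real.monotone_arcsin h
  linarith

lemma measure_sandwich {A B C : Set ℝ} (h1 : A ⊆ B) (h2 : B ⊆ C) {v : ℝ≥0∞}
    (hA : volume A = v) (hC : volume C = v) : volume B = v :=
  le_antisymm ((measure_mono h2).trans_eq hC) (hA ▸ measure_mono h1)

lemma measurableSet_cosIcc (c₁ c₂ : ℝ) : MeasurableSet {θ : ℝ | Real.cos θ ∈ Set.Icc c₁ c₂} :=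
  measurableSet_Icc.preimage Real.continuous_cos.measurable

lemma vol_cos_Icc {c₁ c₂ : ℝ} (h1 : -1 ≤ c₁) (h12 : c₁ ≤ c₂) (h2 : c₂ ≤ 1) :
    volume ({θ : ℝ | Real.cos θ ∈ Set.Icc c₁ c₂} ∩ Set.Ico 0 (2*π)) =
      ENNReal.ofReal (2*(Real.arccos c₁ - Real.arccos c₂)) := by
  have hπ := Real.pi_pos
  set x₁ := Real.arccos c₁ with hx₁def
  set x₂ := Real.arccos c₂ with hx₂def
  have hx21 : x₂ ≤ x₁ := arccos_anti h12
  have hx2 : 0 ≤ x₂ := Real.arccos_nonneg _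
  have hx1 : x₁ ≤ π := Real.arccos_le_pi _
  have hx20 : 0 ≤ x₁ := Real.arccos_nonneg _
  have hx2pi : x₂ ≤ π := Real.arccos_le_pi _
  have hcx1 : Real.cos x₁ = c₁ := Real.cos_arccos h1 (h12.trans h2)
  have hcx2 : Real.cos x₂ = c₂ := Real.cos_arccos (h1.trans h12) h2
  have hsplit : {θ : ℝ | Real.cos θ ∈ Set.Icc c₁ c₂} ∩ Set.Ico 0 (2*π)
      = ({θ : ℝ | Real.cos θ ∈ Set.Icc c₁ c₂} ∩ Set.Ico 0 π)
        ∪ ({θ : ℝ | Real.cos θ ∈ Set.Icc c₁ c₂} ∩ Set.Ico π (2*π)) := by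
    rw [← Set.inter_union_distrib_left, Set.Ico_union_Ico_eq_Ico Real.pi_nonneg (by linarith)]
  have p1 : volume ({θ : ℝ | Real.cos θ ∈ Set.Icc c₁ c₂} ∩ Set.Ico 0 π)
      = ENNReal.ofReal (x₁ - x₂) := by
    apply measure_sandwich (A := Set.Ico x₂ x₁) (C := Set.Icc x₂ x₁)
    · rintro θ ⟨hθ1, hθ2⟩
      refine ⟨⟨?_, ?_⟩, hx2.trans hθ1, hθ2.trans_le hx1⟩
      · rw [← hcx1]
        exact Real.cos_le_cos_of_nonneg_of_le_pi (hx2.trans hθ1) hx1 hθ2.le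
      · rw [← hcx2]
        exact Real.cos_le_cos_of_nonneg_of_le_pi hx2 (hθ2.le.trans hx1) hθ1
    · rintro θ ⟨⟨hc1, hc2⟩, hθ0, hθπ⟩
      have harc : Real.arccos (Real.cos θ) = θ := Real.arccos_cos hθ0 hθπ.le
      exact ⟨harc ▸ arccos_anti hc2, harc ▸ arccos_anti hc1⟩
    · rw [Real.volume_Ico]
    · rw [Real.volume_Icc]
  have p2 : volume ({θ : ℝ | Real.cos θ ∈ Set.Icc c₁ c₂} ∩ Set.Ico π (2*π))
      = ENNReal.ofReal (x₁ - x₂) := by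
    apply measure_sandwich (A := Set.Ico (2*π - x₁) (2*π - x₂)) (C := Set.Icc (2*π - x₁) (2*π - x₂))
    · rintro θ ⟨hθ1, hθ2⟩
      have hσ1 : 2*π - θ ≤ x₁ := by linarith
      have hσ2 : x₂ < 2*π - θ := by linarith
      have hcosθ : Real.cos θ = Real.cos (2*π - θ) := by
        rw [Real.cos_sub, Real.cos_two_pi, Real.sin_two_pi]; ring
      refine ⟨⟨?_, ?_⟩, by linarith, by linarith⟩
      · rw [← hcx1, hcosθ]
        exact Real.cos_le_cos_of_nonneg_of_le_pi (hx2.trans hσ2.le) hx1 hσ1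
      · rw [← hcx2, hcosθ]
        exact Real.cos_le_cos_of_nonneg_of_le_pi hx2 ((hσ1.trans hx1)) hσ2.le
    · rintro θ ⟨⟨hc1, hc2⟩, hθ0, hθπ⟩
      have hcosθ : Real.cos θ = Real.cos (2*π - θ) := by
        rw [Real.cos_sub, Real.cos_two_pi, Real.sin_two_pi]; ring
      have harc : Real.arccos (Real.cos (2*π - θ)) = 2*π - θ :=
        Real.arccos_cos (by linarith) (by linarith)
      rw [hcosθ] at hc1 hc2
      have l1 : x₂ ≤ 2*π - θ := harc ▸ arccos_anti hc2
      have l2 : 2*π - θ ≤ x₁ := harc ▸ arccos_anti hc1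
      exact ⟨by linarith, by linarith⟩
    · rw [Real.volume_Ico]; congr 1; ring
    · rw [Real.volume_Icc]; congr 1; ring
  rw [hsplit, measure_union ?_ ((measurableSet_cosIcc c₁ c₂).inter measurableSet_Ico), p1, p2,
    ← ENNReal.ofReal_add (by linarith) (by linarith)]
  · congr 1; ring
  · exact Set.disjoint_of_subset Set.inter_subset_right Set.inter_subset_right
      (Set.disjoint_left.mpr fun x h h' => h.2.not_ge h'.1)

lemma vol_inter_Ico_eq_Ioc (S : Set ℝ) (a b : ℝ) :
    volume (S ∩ Set.Ico a b) = volume (S ∩ Set.Ioc a b) := by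
  have key : ∀ T : Set ℝ, S ∩ Set.Ioo a b ⊆ T → T ⊆ S ∩ Set.Icc a b →
      volume T = volume (S ∩ Set.Ioo a b) := by
    intro T h1 h2
    refine le_antisymm ?_ (measure_mono h1)
    calc volume T ≤ volume ((S ∩ Set.Ioo a b) ∪ ({a, b} : Set ℝ)) := measure_mono ?_
      _ ≤ volume (S ∩ Set.Ioo a b) + volume ({a, b} : Set ℝ) := measure_union_le _ _
      _ = volume (S ∩ Set.Ioo a b) := by
          have hz : volume ({a, b} : Set ℝ) = 0 :=
            (Set.toFinite _).measure_zero _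
          rw [hz, add_zero]
    intro x hx
    rcases h2 hx with ⟨hxS, hxI⟩
    rcases eq_or_lt_of_le hxI.1 with h | h
    · exact Or.inr (Or.inl h.symm)
    rcases eq_or_lt_of_le hxI.2 with h' | h'
    · exact Or.inr (Or.inr h')
    · exact Or.inl ⟨hxS, h, h'⟩
  rw [key (S ∩ Set.Ico a b) (Set.inter_subset_inter_right _ Set.Ioo_subset_Ico_self)
      (Set.inter_subset_inter_right _ Set.Ico_subset_Icc_self),
    key (S ∩ Set.Ioc a b) (Set.inter_subset_inter_right _ Set.Ioo_subset_Ioc_self)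
      (Set.inter_subset_inter_right _ Set.Ioc_subset_Icc_self)]

lemma vol_periodic_Ico {S : Set ℝ} (hS : MeasurableSet S)
    (hp : ∀ θ : ℝ, (θ + 2*π) ∈ S ↔ θ ∈ S) (a : ℝ) :
    volume (S ∩ Set.Ico a (a + 2*π)) = volume (S ∩ Set.Ico 0 (2*π)) := by
  haveI : Fact ((0:ℝ) < 2*π) := ⟨by positivity⟩
  have hper : Function.Periodic (S.indicator (1 : ℝ → ℝ≥0∞)) (2*π) := by
    intro x
    by_cases h : x ∈ S
    · rw [Set.indicator_of_mem ((hp x).mpr h), Set.indicator_of_mem h]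
      rfl
    · rw [Set.indicator_of_notMem (fun hc => h ((hp x).mp hc)), Set.indicator_of_notMem h]
  have key : ∀ t : ℝ, volume (S ∩ Set.Ioc t (t + 2*π)) = ∫⁻ b : AddCircle (2*π), hper.lift b := by
    intro t
    calc volume (S ∩ Set.Ioc t (t + 2*π))
        = (volume.restrict (Set.Ioc t (t + 2*π))) S := (Measure.restrict_apply hS).symm
      _ = ∫⁻ θ, S.indicator 1 θ ∂(volume.restrict (Set.Ioc t (t + 2*π))) :=
          (lintegral_indicator_one hS).symm
      _ = ∫⁻ θ in Set.Ioc t (t + 2*π), hper.lift θ :=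
          lintegral_congr fun θ => (hper.lift_coe θ).symm
      _ = ∫⁻ b : AddCircle (2*π), hper.lift b := AddCircle.lintegral_preimage (2*π) t _
  rw [vol_inter_Ico_eq_Ioc, vol_inter_Ico_eq_Ioc, key a, ← key 0]
  norm_num

lemma vol_shift_s10 (S : Set ℝ) (θ₁ : ℝ) :
    volume ((fun θ => θ - θ₁) ⁻¹' S ∩ Set.Ico 0 (2*π)) =
      volume (S ∩ Set.Ico (-θ₁) (-θ₁ + 2*π)) := by
  have h : (fun θ => θ - θ₁) ⁻¹' S ∩ Set.Ico 0 (2*π)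
      = (fun θ => -θ₁ + θ) ⁻¹' (S ∩ Set.Ico (-θ₁) (-θ₁ + 2*π)) := by
    ext θ
    simp only [Set.mem_inter_iff, Set.mem_preimage, Set.mem_Ico]
    constructor
    · rintro ⟨h1, h2, h3⟩
      exact ⟨by rwa [neg_add_eq_sub], by linarith, by linarith⟩
    · rintro ⟨h1, h2, h3⟩
      exact ⟨by rwa [neg_add_eq_sub] at h1, by linarith, by linarith⟩
  rw [h, measure_preimage_add]

lemma cond_iff_s10 {r a b : ℝ} (hr : 1 ≤ r) (ha : a ∈ Set.Icc (0:ℝ) 1) (hb : b ∈ Set.Icc (0:ℝ) 1)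
    {φ : ℝ} (hs : Real.sin φ ≠ 0) :
    Real.sqrt (a^2 + b^2 - 2*a*b*Real.cos φ) / |Real.sin φ| ≤ r ↔
      Real.cos φ ∈ Set.Icc (Real.cos (Real.arccos (a/r) + Real.arccos (b/r)))
        (Real.cos (Real.arccos (a/r) - Real.arccos (b/r))) := by
  obtain ⟨ha0, ha1⟩ := ha
  obtain ⟨hb0, hb1⟩ := hb
  have hr0 : (0:ℝ) < r := lt_of_lt_of_le one_pos hr
  have hra : 0 ≤ r^2 - a^2 := by nlinarith
  have hrb : 0 ≤ r^2 - b^2 := by nlinarith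
  have hcA : Real.cos (Real.arccos (a/r)) = a/r :=
    Real.cos_arccos ((by norm_num : (-1:ℝ) ≤ 0).trans (by positivity : (0:ℝ) ≤ a/r)) ((div_le_one hr0).mpr (ha1.trans hr))
  have hcB : Real.cos (Real.arccos (b/r)) = b/r :=
    Real.cos_arccos ((by norm_num : (-1:ℝ) ≤ 0).trans (by positivity : (0:ℝ) ≤ b/r)) ((div_le_one hr0).mpr (hb1.trans hr))
  have hsA : Real.sin (Real.arccos (a/r)) = Real.sqrt (r^2 - a^2) / r := by
    rw [Real.sin_arccos, show 1 - (a/r)^2 = (r^2 - a^2)/r^2 by field_simp,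
      Real.sqrt_div hra, Real.sqrt_sq hr0.le]
  have hsB : Real.sin (Real.arccos (b/r)) = Real.sqrt (r^2 - b^2) / r := by
    rw [Real.sin_arccos, show 1 - (b/r)^2 = (r^2 - b^2)/r^2 by field_simp,
      Real.sqrt_div hrb, Real.sqrt_sq hr0.le]
  set t : ℝ := Real.sqrt (r^2 - a^2) * Real.sqrt (r^2 - b^2) with ht
  have ht0 : 0 ≤ t := by positivity
  have ht2 : t^2 = (r^2 - a^2) * (r^2 - b^2) := by
    rw [ht, mul_pow, Real.sq_sqrt hra, Real.sq_sqrt hrb]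
  have hlo : Real.cos (Real.arccos (a/r) + Real.arccos (b/r)) = (a*b - t)/r^2 := by
    rw [Real.cos_add, hcA, hcB, hsA, hsB, div_mul_div_comm, div_mul_div_comm, ← sub_div, ← ht,
      ← sq]
  have hhi : Real.cos (Real.arccos (a/r) - Real.arccos (b/r)) = (a*b + t)/r^2 := by
    rw [Real.cos_sub, hcA, hcB, hsA, hsB, div_mul_div_comm, div_mul_div_comm, ← add_div, ← ht,
      ← sq]
  have habs : 0 < |Real.sin φ| := abs_pos.mpr hs
  set c : ℝ := Real.cos φ with hc
  have hsq : Real.sin φ ^ 2 = 1 - c^2 := Real.sin_sq φ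
  rw [div_le_iff₀ habs, Real.sqrt_le_left (by positivity), mul_pow, sq_abs, hsq,
    Set.mem_Icc, hlo, hhi, div_le_iff₀ (by positivity : (0:ℝ) < r^2),
    le_div_iff₀ (by positivity : (0:ℝ) < r^2)]
  have hr2 : (0:ℝ) < r^2 := by positivity
  constructor
  · rintro h
    have hQ : r^2 * (a^2 + b^2 - 2*a*b*c) ≤ r^2 * (r^2 * (1 - c^2)) :=
      (mul_le_mul_iff_of_pos_left hr2).mpr h
    have hkey : (r^2 * c - a*b)^2 ≤ t^2 := by nlinarith [hQ, ht2]
    obtain ⟨l1, l2⟩ := abs_le_of_sq_le_sq' hkey ht0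
    exact ⟨by linarith, by linarith⟩
  · rintro ⟨h1, h2⟩
    have hprod : (r^2 * c - a*b - t) * (r^2 * c - a*b + t) ≤ 0 :=
      mul_nonpos_iff.mpr (Or.inr ⟨by linarith, by linarith⟩)
    have hQ : r^2 * (a^2 + b^2 - 2*a*b*c) ≤ r^2 * (r^2 * (1 - c^2)) := by
      nlinarith [hprod, ht2]
    exact (mul_le_mul_iff_of_pos_left hr2).mp hQ

lemma circle_measure {r : ℝ} (hr : 1 ≤ r) {a b : ℝ} (ha : a ∈ Set.Icc (0:ℝ) 1)
    (hb : b ∈ Set.Icc (0:ℝ) 1) (θ₁ : ℝ) :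
    unifCircle {θ₂ : ℝ | interDist a b θ₁ θ₂ ≤ r} =
      ENNReal.ofReal (2 * Real.arccos (max a b / r) / π) := by
  have hπ := Real.pi_pos
  have hr0 : (0:ℝ) < r := lt_of_lt_of_le one_pos hr
  set A := Real.arccos (a/r) with hA
  set B := Real.arccos (b/r) with hB
  set c₁ := Real.cos (A + B) with hc₁
  set c₂ := Real.cos (A - B) with hc₂
  have hA0 : 0 ≤ A := Real.arccos_nonneg _
  have hB0 : 0 ≤ B := Real.arccos_nonneg _
  have hA2 : A ≤ π/2 := Real.arccos_le_pi_div_two.mpr (div_nonneg ha.1 hr0.le)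
  have hB2 : B ≤ π/2 := Real.arccos_le_pi_div_two.mpr (div_nonneg hb.1 hr0.le)
  have hsinA : 0 ≤ Real.sin A := by rw [hA, Real.sin_arccos]; exact Real.sqrt_nonneg _
  have hsinB : 0 ≤ Real.sin B := by rw [hB, Real.sin_arccos]; exact Real.sqrt_nonneg _
  have h1 : (-1:ℝ) ≤ c₁ := Real.neg_one_le_cos _
  have h2 : c₂ ≤ 1 := Real.cos_le_one _
  have h12 : c₁ ≤ c₂ := by
    have hdiff : c₂ - c₁ = 2 * Real.sin A * Real.sin B := by
      rw [hc₁, hc₂, Real.cos_add, Real.cos_sub]; ring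
    nlinarith [mul_nonneg hsinA hsinB]
  have hper : ∀ θ : ℝ, (θ + 2*π) ∈ {σ : ℝ | Real.cos σ ∈ Set.Icc c₁ c₂}
      ↔ θ ∈ {σ : ℝ | Real.cos σ ∈ Set.Icc c₁ c₂} := by
    intro θ
    simp [Real.cos_add_two_pi]
  have hsetvol : volume ({θ₂ : ℝ | interDist a b θ₁ θ₂ ≤ r} ∩ Set.Ico 0 (2*π))
      = volume ((fun θ₂ => θ₂ - θ₁) ⁻¹' {σ : ℝ | Real.cos σ ∈ Set.Icc c₁ c₂}
          ∩ Set.Ico 0 (2*π)) := by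
    apply measure_congr
    have hN : volume {θ₂ : ℝ | Real.sin (θ₂ - θ₁) = 0} = 0 := by
      have hsub : {θ₂ : ℝ | Real.sin (θ₂ - θ₁) = 0} ⊆ Set.range (fun n : ℤ => θ₁ + n * π) := by
        intro θ₂ hθ₂
        obtain ⟨n, hn⟩ := Real.sin_eq_zero_iff.mp hθ₂
        refine Set.mem_range.mpr ⟨n, ?_⟩
        linarith
      exact measure_mono_null hsub ((Set.countable_range _).measure_zero _)
    have hiff : ∀ θ₂ : ℝ, Real.sin (θ₂ - θ₁) ≠ 0 →
        (interDist a b θ₁ θ₂ ≤ r ↔ Real.cos (θ₂ - θ₁) ∈ Set.Icc c₁ c₂) := by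
      intro θ₂ hs
      exact cond_iff_s10 hr ha hb hs
    rw [MeasureTheory.ae_eq_set]
    constructor
    · apply measure_mono_null _ hN
      rintro θ₂ ⟨⟨hmem, hIco⟩, hnot⟩
      by_contra hsin
      exact hnot ⟨(hiff θ₂ hsin).mp hmem, hIco⟩
    · apply measure_mono_null _ hN
      rintro θ₂ ⟨⟨hmem, hIco⟩, hnot⟩
      by_contra hsin
      exact hnot ⟨(hiff θ₂ hsin).mpr hmem, hIco⟩
  have harc1 : Real.arccos c₁ = A + B := Real.arccos_cos (by linarith) (by linarith)
  have hdiff2 : Real.arccos c₁ - Real.arccos c₂ = 2 * Real.arccos (max a b / r) := by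
    rcases le_total a b with hab | hab
    · have hBA : B ≤ A := by
        rw [hA, hB]
        exact arccos_anti (by gcongr)
      have harc2 : Real.arccos c₂ = A - B := Real.arccos_cos (by linarith) (by linarith)
      rw [harc1, harc2, max_eq_right hab, ← hB]
      ring
    · have hAB : A ≤ B := by
        rw [hA, hB]
        exact arccos_anti (by gcongr)
      have hc₂' : c₂ = Real.cos (B - A) := by
        rw [hc₂, show A - B = -(B - A) by ring, Real.cos_neg]
      have harc2 : Real.arccos c₂ = B - A := by
        rw [hc₂']
        exact Real.arccos_cos (by linarith) (by linarith)
      rw [harc1, harc2, max_eq_left hab, ← hA]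
      ring
  rw [unifCircle, Measure.smul_apply, Measure.restrict_apply' measurableSet_Ico, hsetvol,
    vol_shift_s10, vol_periodic_Ico (measurableSet_cosIcc c₁ c₂) hper, vol_cos_Icc h1 h12 h2, hdiff2,
    smul_eq_mul, ← ENNReal.ofReal_inv_of_pos (by positivity), ← ENNReal.ofReal_mul (by positivity)]
  congr 1
  field_simp

lemma sqrt_one_sub_div_sq {r t : ℝ} (hr0 : 0 < r) (h : 0 ≤ r^2 - t^2) :
    Real.sqrt (1 - (t/r)^2) = Real.sqrt (r^2 - t^2) / r := by
  rw [show 1 - (t/r)^2 = (r^2 - t^2)/r^2 by field_simp, Real.sqrt_div h, Real.sqrt_sq hr0.le]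

lemma ftc_arccos {r : ℝ} (hr : 1 ≤ r) {a₀ : ℝ} (h0 : 0 ≤ a₀) (h1 : a₀ ≤ 1) :
    ∫ t in a₀..1, Real.arccos (t/r)
      = (Real.arccos (1/r) - Real.sqrt (r^2 - 1))
        - (a₀ * Real.arccos (a₀/r) - Real.sqrt (r^2 - a₀^2)) := by
  have hr0 : (0:ℝ) < r := lt_of_lt_of_le one_pos hr
  set G : ℝ → ℝ := fun t => t * Real.arccos (t/r) - Real.sqrt (r^2 - t^2) with hGdef
  have hG : ∀ t ∈ Set.Ioo a₀ (1:ℝ), HasDerivAt G (Real.arccos (t/r)) t := by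
    intro t ht
    have ht0 : 0 ≤ t := le_trans h0 ht.1.le
    have htr : t < r := lt_of_lt_of_le ht.2 hr
    have hrt2 : 0 < r^2 - t^2 := by nlinarith
    have hs0 : 0 < Real.sqrt (r^2 - t^2) := Real.sqrt_pos.mpr hrt2
    have hd1 : HasDerivAt (fun t : ℝ => t/r) (1/r) t := (hasDerivAt_id t).div_const r
    have htm : t/r ≠ -1 := by
      have : (0:ℝ) ≤ t/r := div_nonneg ht0 hr0.le
      intro hc; rw [hc] at this; linarith
    have ht1' : t/r ≠ 1 := ne_of_lt ((div_lt_one hr0).mpr htr)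
    have hd2 : HasDerivAt (fun t : ℝ => Real.arccos (t/r))
        (-(1 / Real.sqrt (1 - (t/r)^2)) * (1/r)) t :=
      by have := (Real.hasDerivAt_arccos htm ht1').comp t hd1; exact this
    have hmul : HasDerivAt (fun t : ℝ => t * Real.arccos (t/r))
        (1 * Real.arccos (t/r) + t * (-(1 / Real.sqrt (1 - (t/r)^2)) * (1/r))) t :=
      (hasDerivAt_id t).mul hd2
    have hpoly : HasDerivAt (fun t : ℝ => r^2 - t^2) (-(2*t)) t := by
      simpa using (hasDerivAt_pow 2 t).const_sub (r^2)
    have hsq : HasDerivAt (fun t : ℝ => Real.sqrt (r^2 - t^2))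
        (1 / (2 * Real.sqrt (r^2 - t^2)) * (-(2*t))) t :=
      (Real.hasDerivAt_sqrt hrt2.ne').comp t hpoly
    have := hmul.sub hsq
    refine this.congr_deriv (Eq.symm ?_)
    rw [sqrt_one_sub_div_sq hr0 hrt2.le]
    field_simp
    ring
  have hcont : ContinuousOn G (Set.Icc a₀ 1) := by
    apply Continuous.continuousOn
    exact (continuous_id.mul (Real.continuous_arccos.comp (continuous_id.div_const r))).sub
      (Real.continuous_sqrt.comp (continuous_const.sub (continuous_pow 2)))
  have hint : IntervalIntegrable (fun t => Real.arccos (t/r)) volume a₀ 1 :=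
    (Real.continuous_arccos.comp (continuous_id.div_const r)).intervalIntegrable a₀ 1
  have := intervalIntegral.integral_eq_sub_of_hasDeriv_right_of_le h1 hcont
    (fun t ht => (hG t ht).hasDerivWithinAt) hint
  rw [this, hGdef]
  norm_num

lemma ftc_sqrt {r : ℝ} (hr : 1 ≤ r) :
    ∫ t in (0:ℝ)..1, Real.sqrt (r^2 - t^2)
      = (Real.sqrt (r^2 - 1) + r^2 * Real.arcsin (1/r)) / 2 := by
  have hr0 : (0:ℝ) < r := lt_of_lt_of_le one_pos hr
  set Φ : ℝ → ℝ := fun t => (t * Real.sqrt (r^2 - t^2) + r^2 * Real.arcsin (t/r)) / 2 with hΦdef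
  have hΦ : ∀ t ∈ Set.Ioo (0:ℝ) 1, HasDerivAt Φ (Real.sqrt (r^2 - t^2)) t := by
    intro t ht
    have ht0 : 0 ≤ t := ht.1.le
    have htr : t < r := lt_of_lt_of_le ht.2 hr
    have hrt2 : 0 < r^2 - t^2 := by nlinarith
    have hs0 : 0 < Real.sqrt (r^2 - t^2) := Real.sqrt_pos.mpr hrt2
    have hd1 : HasDerivAt (fun t : ℝ => t/r) (1/r) t := (hasDerivAt_id t).div_const r
    have htm : t/r ≠ -1 := by
      have : (0:ℝ) ≤ t/r := div_nonneg ht0 hr0.le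
      intro hc; rw [hc] at this; linarith
    have ht1' : t/r ≠ 1 := ne_of_lt ((div_lt_one hr0).mpr htr)
    have harcsin : HasDerivAt (fun t : ℝ => Real.arcsin (t/r))
        (1 / Real.sqrt (1 - (t/r)^2) * (1/r)) t :=
      by have := (Real.hasDerivAt_arcsin htm ht1').comp t hd1; exact this
    have hpoly : HasDerivAt (fun t : ℝ => r^2 - t^2) (-(2*t)) t := by
      simpa using (hasDerivAt_pow 2 t).const_sub (r^2)
    have hsq : HasDerivAt (fun t : ℝ => Real.sqrt (r^2 - t^2))
        (1 / (2 * Real.sqrt (r^2 - t^2)) * (-(2*t))) t :=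
      (Real.hasDerivAt_sqrt hrt2.ne').comp t hpoly
    have hmul : HasDerivAt (fun t : ℝ => t * Real.sqrt (r^2 - t^2))
        (1 * Real.sqrt (r^2 - t^2) + t * (1 / (2 * Real.sqrt (r^2 - t^2)) * (-(2*t)))) t :=
      (hasDerivAt_id t).mul hsq
    have := (hmul.add (harcsin.const_mul (r^2))).div_const 2
    have hss : Real.sqrt (r^2 - t^2) ^ 2 = r^2 - t^2 := Real.sq_sqrt hrt2.le
    refine this.congr_deriv (Eq.symm ?_)
    rw [sqrt_one_sub_div_sq hr0 hrt2.le]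
    field_simp
    linear_combination hss
  have hcont : ContinuousOn Φ (Set.Icc 0 1) := by
    apply Continuous.continuousOn
    exact ((continuous_id.mul (Real.continuous_sqrt.comp (continuous_const.sub (continuous_pow 2)))).add
      (continuous_const.mul (Real.continuous_arcsin.comp (continuous_id.div_const r)))).div_const 2
  have hint : IntervalIntegrable (fun t => Real.sqrt (r^2 - t^2)) volume 0 1 :=
    (Real.continuous_sqrt.comp (continuous_const.sub (continuous_pow 2))).intervalIntegrable 0 1
  have := intervalIntegral.integral_eq_sub_of_hasDeriv_right_of_le zero_le_one hcont
    (fun t ht => (hΦ t ht).hasDerivWithinAt) hint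
  rw [this, hΦdef]
  norm_num [Real.arcsin_zero]

lemma inner_integral {r : ℝ} (hr : 1 ≤ r) {a : ℝ} (ha : a ∈ Set.Icc (0:ℝ) 1) :
    ∫ b in (0:ℝ)..1, Real.arccos (max a b / r)
      = Real.arccos (1/r) - Real.sqrt (r^2 - 1) + Real.sqrt (r^2 - a^2) := by
  have hcont : Continuous fun b : ℝ => Real.arccos (max a b / r) :=
    Real.continuous_arccos.comp ((continuous_const.max continuous_id).div_const r)
  have hsplit := intervalIntegral.integral_add_adjacent_intervals
    (a := (0:ℝ)) (b := a) (c := 1) (f := fun b => Real.arccos (max a b / r))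
    (hcont.intervalIntegrable (μ := volume) 0 a) (hcont.intervalIntegrable a 1)
  rw [← hsplit]
  have e1 : (∫ b in (0:ℝ)..a, Real.arccos (max a b / r)) = a * Real.arccos (a/r) := by
    rw [intervalIntegral.integral_congr (g := fun _ => Real.arccos (a/r)) ?_,
      intervalIntegral.integral_const, smul_eq_mul, sub_zero]
    intro b hb
    rw [Set.uIcc_of_le ha.1] at hb
    simp only []
    rw [max_eq_left hb.2]
  have e2 : (∫ b in a..1, Real.arccos (max a b / r))
      = (Real.arccos (1/r) - Real.sqrt (r^2 - 1))
        - (a * Real.arccos (a/r) - Real.sqrt (r^2 - a^2)) := by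
    rw [intervalIntegral.integral_congr (g := fun b => Real.arccos (b/r)) ?_,
      ftc_arccos hr ha.1 ha.2]
    intro b hb
    rw [Set.uIcc_of_le ha.2] at hb
    simp only []
    rw [max_eq_right hb.1]
  rw [e1, e2]
  ring

instance : SFinite unifRadius := by unfold unifRadius; infer_instance

instance : SFinite unifCircle := by
  unfold unifCircle
  infer_instance

instance inst_s10 : IsProbabilityMeasure unifCircle := by
  constructor
  rw [unifCircle, Measure.smul_apply, Measure.restrict_apply MeasurableSet.univ,
    Set.univ_inter, Real.volume_Ico, smul_eq_mul, sub_zero]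
  exact ENNReal.inv_mul_cancel (ENNReal.ofReal_pos.mpr (by positivity)).ne' ENNReal.ofReal_ne_top

lemma measurable_interDist :
    Measurable fun q : ℝ × ℝ × ℝ × ℝ => interDist q.1 q.2.1 q.2.2.1 q.2.2.2 := by
  unfold interDist
  fun_prop

set_option maxHeartbeats 1000000 in
theorem bertrand_uniform_radius_large (r : ℝ) (hr : 1 ≤ r) :
    (unifRadius.prod (unifRadius.prod (unifCircle.prod unifCircle)))
      {q : ℝ × ℝ × ℝ × ℝ | interDist q.1 q.2.1 q.2.2.1 q.2.2.2 ≤ r} =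
    ENNReal.ofReal (2 / π * Real.arccos (1 / r) + r ^ 2 / π * Real.arcsin (1 / r)
      - 1 / π * Real.sqrt (r ^ 2 - 1)) := by
  have hπ := Real.pi_pos
  set S := {q : ℝ × ℝ × ℝ × ℝ | interDist q.1 q.2.1 q.2.2.1 q.2.2.2 ≤ r} with hSdef
  have hmeasS : MeasurableSet S := measurableSet_le measurable_interDist measurable_const
  have stepA : ∀ t₁ t₂ : ℝ, t₁ ∈ Set.Icc (0:ℝ) 1 → t₂ ∈ Set.Icc (0:ℝ) 1 →
      (unifCircle.prod unifCircle) {p : ℝ × ℝ | interDist t₁ t₂ p.1 p.2 ≤ r}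
        = ENNReal.ofReal (2 * Real.arccos (max t₁ t₂ / r) / π) := by
    intro t₁ t₂ ht₁ ht₂
    have hm : MeasurableSet {p : ℝ × ℝ | interDist t₁ t₂ p.1 p.2 ≤ r} := by
      have hmf : Measurable fun p : ℝ × ℝ => interDist t₁ t₂ p.1 p.2 := by
        unfold interDist; fun_prop
      exact measurableSet_le hmf measurable_const
    rw [Measure.prod_apply hm]
    have hcong : (∫⁻ θ₁, unifCircle (Prod.mk θ₁ ⁻¹' {p : ℝ × ℝ | interDist t₁ t₂ p.1 p.2 ≤ r})
          ∂unifCircle)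
        = ∫⁻ _θ₁, ENNReal.ofReal (2 * Real.arccos (max t₁ t₂ / r) / π) ∂unifCircle :=
      lintegral_congr fun θ₁ => circle_measure hr ht₁ ht₂ θ₁
    rw [hcong, lintegral_const, measure_univ, mul_one]
  have stepB : ∀ t₁ ∈ Set.Icc (0:ℝ) 1,
      (unifRadius.prod (unifCircle.prod unifCircle)) (Prod.mk t₁ ⁻¹' S)
        = ENNReal.ofReal (2/π * (Real.arccos (1/r) - Real.sqrt (r^2 - 1)
            + Real.sqrt (r^2 - t₁^2))) := by
    intro t₁ ht₁
    have hm1 : MeasurableSet (Prod.mk t₁ ⁻¹' S) := hmeasS.preimage measurable_prodMk_left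
    rw [Measure.prod_apply hm1]
    have hrw : ∀ t₂ ∈ Set.Icc (0:ℝ) 1,
        (unifCircle.prod unifCircle) (Prod.mk t₂ ⁻¹' (Prod.mk t₁ ⁻¹' S))
          = ENNReal.ofReal (2 * Real.arccos (max t₁ t₂ / r) / π) :=
      fun t₂ ht₂ => stepA t₁ t₂ ht₁ ht₂
    have hcont : Continuous fun t₂ : ℝ => 2 * Real.arccos (max t₁ t₂ / r) / π :=
      ((continuous_const.mul (Real.continuous_arccos.comp
        ((continuous_const.max continuous_id).div_const r))).div_const π)
    have hInt : Integrable (fun t₂ : ℝ => 2 * Real.arccos (max t₁ t₂ / r) / π)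
        (volume.restrict (Set.Icc 0 1)) := hcont.integrableOn_Icc
    have hnn : 0 ≤ᶠ[ae (volume.restrict (Set.Icc (0:ℝ) 1))]
        fun t₂ : ℝ => 2 * Real.arccos (max t₁ t₂ / r) / π :=
      Filter.Eventually.of_forall fun t₂ =>
        div_nonneg (mul_nonneg (by norm_num) (Real.arccos_nonneg _)) hπ.le
    show ∫⁻ t₂ in Set.Icc (0:ℝ) 1,
        (unifCircle.prod unifCircle) (Prod.mk t₂ ⁻¹' (Prod.mk t₁ ⁻¹' S)) ∂volume = _
    rw [setLIntegral_congr_fun measurableSet_Icc hrw,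
      ← MeasureTheory.ofReal_integral_eq_lintegral_ofReal hInt hnn]
    congr 1
    rw [MeasureTheory.integral_Icc_eq_integral_Ioc,
      ← intervalIntegral.integral_of_le zero_le_one,
      show (fun t₂ : ℝ => 2 * Real.arccos (max t₁ t₂ / r) / π)
        = fun t₂ : ℝ => (2/π) * Real.arccos (max t₁ t₂ / r) from funext fun _ => by ring,
      intervalIntegral.integral_const_mul, inner_integral hr ht₁]
  have hcont2 : Continuous fun t₁ : ℝ => 2/π * (Real.arccos (1/r) - Real.sqrt (r^2 - 1)
      + Real.sqrt (r^2 - t₁^2)) :=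
    continuous_const.mul ((continuous_const.add
      (Real.continuous_sqrt.comp (continuous_const.sub (continuous_pow 2)))))
  have hInt2 : Integrable (fun t₁ : ℝ => 2/π * (Real.arccos (1/r) - Real.sqrt (r^2 - 1)
      + Real.sqrt (r^2 - t₁^2))) (volume.restrict (Set.Icc 0 1)) := hcont2.integrableOn_Icc
  have hnn2 : 0 ≤ᶠ[ae (volume.restrict (Set.Icc (0:ℝ) 1))]
      fun t₁ : ℝ => 2/π * (Real.arccos (1/r) - Real.sqrt (r^2 - 1)
        + Real.sqrt (r^2 - t₁^2)) := by
    rw [Filter.EventuallyLE, ae_restrict_iff' measurableSet_Icc]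
    apply ae_of_all
    intro t₁ ht₁
    have hmono : Real.sqrt (r^2 - 1) ≤ Real.sqrt (r^2 - t₁^2) := by
      apply Real.sqrt_le_sqrt
      nlinarith [ht₁.1, ht₁.2]
    have := Real.arccos_nonneg (1/r)
    have h2π : (0:ℝ) ≤ 2/π := by positivity
    simp only [Pi.zero_apply]
    nlinarith
  have hsqrtcont : Continuous fun t₁ : ℝ => (2/π) * Real.sqrt (r^2 - t₁^2) :=
    continuous_const.mul (Real.continuous_sqrt.comp (continuous_const.sub (continuous_pow 2)))
  rw [Measure.prod_apply hmeasS]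
  show ∫⁻ t₁ in Set.Icc (0:ℝ) 1,
      (unifRadius.prod (unifCircle.prod unifCircle)) (Prod.mk t₁ ⁻¹' S) ∂volume = _
  rw [setLIntegral_congr_fun measurableSet_Icc stepB,
    ← MeasureTheory.ofReal_integral_eq_lintegral_ofReal hInt2 hnn2]
  congr 1
  rw [MeasureTheory.integral_Icc_eq_integral_Ioc,
    ← intervalIntegral.integral_of_le zero_le_one,
    show (fun t₁ : ℝ => 2/π * (Real.arccos (1/r) - Real.sqrt (r^2 - 1)
        + Real.sqrt (r^2 - t₁^2)))
      = fun t₁ : ℝ => (2/π * (Real.arccos (1/r) - Real.sqrt (r^2 - 1)))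
        + (2/π) * Real.sqrt (r^2 - t₁^2) from funext fun _ => by ring,
    intervalIntegral.integral_add (intervalIntegrable_const)
      ((hsqrtcont).intervalIntegrable 0 1),
    intervalIntegral.integral_const, intervalIntegral.integral_const_mul, ftc_sqrt hr,
    smul_eq_mul]
  field_simp
  ring
end

section
/- For every r > 0, (4/π)·∫₀^r (1 − e^{−t²/2})·t·e^{−t²/2}·arccos(t/r) dt = 1 − 2·e^{−r²/4}·I₀(r²/4) + e^{−r²/2}·I₀(r²/2), where I₀(x) := ∑_{k≥0} (x²/4)^k/(k!)² is the modified Bessel function of the first kind of order zero. (This is the probability that the intersection point of two independent random lines, each having its closest point to the origin distributed as a two-dimensional standard Gaussian, lies within distance r of the origin.) -/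
open Real intervalIntegral

/-- The modified Bessel function of the first kind of order zero,
`I₀(x) = ∑_{k ≥ 0} (x²/4)^k / (k!)²`. -/
noncomputable def besselI0 (x : ℝ) : ℝ :=
  ∑' k : ℕ, (x ^ 2 / 4) ^ k / ((Nat.factorial k : ℝ)) ^ 2

lemma besselI0_summable (x : ℝ) :
    Summable (fun k : ℕ => (x ^ 2 / 4) ^ k / ((Nat.factorial k : ℝ)) ^ 2) := by
  apply Summable.of_nonneg_of_le (fun k => by positivity)
    (fun k => ?_) (Real.summable_pow_div_factorial (x ^ 2 / 4))
  have h1 : (1:ℝ) ≤ (Nat.factorial k : ℝ) := by exact_mod_cast Nat.one_le_iff_ne_zero.mpr (Nat.factorial_ne_zero k)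
  have h2 : (Nat.factorial k : ℝ) ≤ ((Nat.factorial k : ℝ))^2 := by nlinarith
  apply div_le_div_of_nonneg_left ?_ ?_ h2 |>.trans_eq rfl
  · positivity
  · positivity

lemma real_exp_tsum (x : ℝ) : Real.exp x = ∑' n : ℕ, x ^ n / (Nat.factorial n : ℝ) := by
  rw [Real.exp_eq_exp_ℝ, NormedSpace.exp_eq_tsum_div]

lemma wallis_prod (m : ℕ) :
    ∏ i ∈ Finset.range m, (2 * (i : ℝ) + 1) / (2 * i + 2)
      = (Nat.factorial (2 * m) : ℝ) / (4 ^ m * ((Nat.factorial m : ℝ)) ^ 2) := by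
  induction m with
  | zero => simp
  | succ k ih =>
    rw [Finset.prod_range_succ, ih]
    have h1 : (2 * (k+1)) = (2*k+1) + 1 := by ring
    rw [h1, Nat.factorial_succ, Nat.factorial_succ, Nat.factorial_succ]
    push_cast
    have hk : (0:ℝ) < Nat.factorial k := by exact_mod_cast Nat.factorial_pos k
    have h2k : (0:ℝ) < Nat.factorial (2*k) := by exact_mod_cast Nat.factorial_pos (2*k)
    field_simp
    ring

lemma sin_pow_symm (k : ℕ) :
    (∫ x in (-(π/2))..(π/2), Real.sin x ^ k)
      = (1 + (-1:ℝ)^k) / 2 * ∫ x in (0:ℝ)..π, Real.sin x ^ k := by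
  have hint : ∀ a b : ℝ, IntervalIntegrable (fun x => Real.sin x ^ k) MeasureTheory.volume a b :=
    fun a b => (continuous_sin.pow k).intervalIntegrable a b
  have h1 : (∫ x in (-(π/2))..(0:ℝ), Real.sin x ^ k)
      = (-1:ℝ)^k * ∫ x in (0:ℝ)..(π/2), Real.sin x ^ k := by
    have := intervalIntegral.integral_comp_neg (a := (0:ℝ)) (b := π/2)
      (fun x => Real.sin x ^ k)
    rw [neg_zero] at this
    rw [← this, ← intervalIntegral.integral_const_mul]
    congr 1 with x
    rw [Real.sin_neg]
    ring
  have h2 : (∫ x in (π/2)..π, Real.sin x ^ k) = ∫ x in (0:ℝ)..(π/2), Real.sin x ^ k := by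
    have := intervalIntegral.integral_comp_sub_left (a := (π/2)) (b := π)
      (fun x => Real.sin x ^ k) π
    simp only [sub_self, sub_half] at this
    rw [← this]
    congr 1 with x
    rw [Real.sin_pi_sub]
  have hsplit1 : (∫ x in (-(π/2))..(π/2), Real.sin x ^ k)
      = (∫ x in (-(π/2))..(0:ℝ), Real.sin x ^ k) + ∫ x in (0:ℝ)..(π/2), Real.sin x ^ k :=
    (intervalIntegral.integral_add_adjacent_intervals (hint _ _) (hint _ _)).symm
  have hsplit2 : (∫ x in (0:ℝ)..π, Real.sin x ^ k)
      = (∫ x in (0:ℝ)..(π/2), Real.sin x ^ k) + ∫ x in (π/2)..π, Real.sin x ^ k :=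
    (intervalIntegral.integral_add_adjacent_intervals (hint _ _) (hint _ _)).symm
  rw [hsplit1, hsplit2, h1, h2]
  ring

set_option maxHeartbeats 1000000 in
lemma expCos_integral (c : ℝ) :
    (∫ x in (0:ℝ)..π, Real.exp (c * Real.cos x)) = π * besselI0 c := by
  have hle : (-(π/2)) ≤ (π/2) := by linarith [pi_pos]
  -- shift to symmetric interval
  have h1 : (∫ x in (0:ℝ)..π, Real.exp (c * Real.cos x))
      = ∫ x in (-(π/2))..(π/2), Real.exp (-(c * Real.sin x)) := by
    have := intervalIntegral.integral_comp_add_right (a := -(π/2)) (b := π/2)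
      (fun x => Real.exp (c * Real.cos x)) (π/2)
    rw [show -(π/2) + π/2 = (0:ℝ) by ring, show π/2 + π/2 = π by ring] at this
    rw [← this]
    congr 1 with x
    rw [Real.cos_add_pi_div_two]
    ring_nf
  rw [h1]
  set μ := MeasureTheory.volume.restrict (Set.Ioc (-(π/2)) (π/2)) with hμ
  have hμuniv : (μ Set.univ).toReal = π := by
    rw [hμ, MeasureTheory.Measure.restrict_apply MeasurableSet.univ, Set.univ_inter,
      Real.volume_Ioc, show π/2 - -(π/2) = π by ring, ENNReal.toReal_ofReal pi_pos.le]
  set F : ℕ → ℝ → ℝ := fun k x => (-(c * Real.sin x)) ^ k / (Nat.factorial k : ℝ) with hF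
  have hFcont : ∀ k, Continuous (F k) := fun k => by
    simp only [hF]; fun_prop
  have hF_int : ∀ k, MeasureTheory.Integrable (F k) μ :=
    fun k => (hFcont k).integrableOn_Ioc
  have hFbound : ∀ k x, ‖F k x‖ ≤ |c| ^ k / (Nat.factorial k : ℝ) := by
    intro k x
    simp only [hF, norm_div, norm_pow, norm_neg, Real.norm_natCast]
    have h1 : ‖c * Real.sin x‖ ≤ |c| := by
      rw [norm_mul]
      calc ‖c‖ * ‖Real.sin x‖ ≤ ‖c‖ * 1 :=
        mul_le_mul_of_nonneg_left (by rw [Real.norm_eq_abs]; exact abs_sin_le_one x) (norm_nonneg c)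
      _ = |c| := by rw [mul_one, Real.norm_eq_abs]
    have hfact : (0:ℝ) < Nat.factorial k := by exact_mod_cast Nat.factorial_pos k
    exact (div_le_div_iff_of_pos_right hfact).mpr (pow_le_pow_left₀ (norm_nonneg _) h1 k)
  have hnormint : ∀ k, (∫ x, ‖F k x‖ ∂μ) ≤ π * (|c| ^ k / (Nat.factorial k : ℝ)) := by
    intro k
    calc (∫ x, ‖F k x‖ ∂μ) ≤ ∫ _x, |c| ^ k / (Nat.factorial k : ℝ) ∂μ :=
          MeasureTheory.integral_mono (hF_int k).norm
            (MeasureTheory.integrable_const _) (fun x => hFbound k x)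
      _ = π * (|c| ^ k / (Nat.factorial k : ℝ)) := by
          rw [MeasureTheory.integral_const, smul_eq_mul, MeasureTheory.measureReal_def, hμuniv]
  have hF_sum : Summable fun k => ∫ x, ‖F k x‖ ∂μ := by
    apply Summable.of_nonneg_of_le
      (fun k => MeasureTheory.integral_nonneg (fun x => norm_nonneg _)) hnormint
    exact (Real.summable_pow_div_factorial |c|).mul_left π
  have hswap := MeasureTheory.integral_tsum_of_summable_integral_norm hF_int hF_sum
  have hpt : ∀ x, (∑' k, F k x) = Real.exp (-(c * Real.sin x)) := by
    intro x
    rw [real_exp_tsum]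
  -- the interval integral equals the set integral
  have h2 : (∫ x in (-(π/2))..(π/2), Real.exp (-(c * Real.sin x)))
      = ∫ x, (∑' k, F k x) ∂μ := by
    rw [intervalIntegral.integral_of_le hle]
    exact MeasureTheory.setIntegral_congr_fun measurableSet_Ioc (fun x _ => (hpt x).symm)
  rw [h2, ← hswap]
  -- compute each term
  have hterm : ∀ k, (∫ x, F k x ∂μ)
      = (-c) ^ k / (Nat.factorial k : ℝ)
        * ((1 + (-1:ℝ)^k) / 2 * ∫ x in (0:ℝ)..π, Real.sin x ^ k) := by
    intro k
    rw [← sin_pow_symm k, ← intervalIntegral.integral_of_le hle, ← intervalIntegral.integral_const_mul]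
    rw [intervalIntegral.integral_of_le hle, intervalIntegral.integral_of_le hle]
    apply MeasureTheory.setIntegral_congr_fun measurableSet_Ioc
    intro x _
    simp only [hF]
    rw [show -(c * Real.sin x) = (-c) * Real.sin x by ring, mul_pow]
    ring
  have hterm2 : ∀ m : ℕ, (∫ x, F (2*m) x ∂μ) = π * ((c^2/4)^m / ((Nat.factorial m : ℝ))^2) := by
    intro m
    rw [hterm, integral_sin_pow_even, wallis_prod]
    have h4 : ((-1:ℝ))^(2*m) = 1 := by rw [pow_mul]; norm_num
    have h5 : ((-c):ℝ)^(2*m) = (c^2)^m := by rw [pow_mul]; ring_nf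
    have hfm : (0:ℝ) < Nat.factorial m := by exact_mod_cast Nat.factorial_pos m
    have hf2m : (0:ℝ) < Nat.factorial (2*m) := by exact_mod_cast Nat.factorial_pos (2*m)
    rw [h4, h5]
    have h6 : ((c^2)^m : ℝ) / 4^m = (c^2/4)^m := by rw [div_pow]
    rw [← h6]
    field_simp
    ring
  have hterm3 : ∀ m : ℕ, (∫ x, F (2*m+1) x ∂μ) = 0 := by
    intro m
    rw [hterm]
    have h4 : ((-1:ℝ))^(2*m+1) = -1 := by rw [pow_succ, pow_mul]; norm_num
    rw [h4]
    norm_num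
  have hsum_even : Summable fun m => ∫ x, F (2*m) x ∂μ := by
    simp only [hterm2]
    exact (besselI0_summable c).mul_left π
  have hsum_odd : Summable fun m => ∫ x, F (2*m+1) x ∂μ := by
    simp only [hterm3]; exact summable_zero
  rw [← tsum_even_add_odd hsum_even hsum_odd]
  simp only [hterm2, hterm3, tsum_zero, add_zero]
  rw [tsum_mul_left, besselI0]

lemma exp_sin_sq_integral (a : ℝ) :
    (∫ θ in (0:ℝ)..(π/2), Real.exp (-(a * Real.sin θ ^ 2)))
      = π/2 * (Real.exp (-(a/2)) * besselI0 (a/2)) := by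
  have hpt : ∀ θ : ℝ, Real.exp (-(a * Real.sin θ ^ 2))
      = Real.exp (-(a/2)) * Real.exp (a/2 * Real.cos (2*θ)) := by
    intro θ
    rw [← Real.exp_add, Real.cos_two_mul]
    have h := Real.sin_sq_add_cos_sq θ
    congr 1
    linear_combination (-a) * h
  have h1 : (∫ θ in (0:ℝ)..(π/2), Real.exp (-(a * Real.sin θ ^ 2)))
      = Real.exp (-(a/2)) * ∫ θ in (0:ℝ)..(π/2), Real.exp (a/2 * Real.cos (2*θ)) := by
    rw [← intervalIntegral.integral_const_mul]
    congr 1 with θ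
    exact hpt θ
  have h2 : (∫ θ in (0:ℝ)..(π/2), Real.exp (a/2 * Real.cos (2*θ)))
      = 2⁻¹ * ∫ x in (0:ℝ)..π, Real.exp (a/2 * Real.cos x) := by
    have := intervalIntegral.integral_comp_mul_left (a := (0:ℝ)) (b := π/2)
      (fun x => Real.exp (a/2 * Real.cos x)) (c := 2) two_ne_zero
    rw [mul_zero, show (2:ℝ) * (π/2) = π by ring] at this
    rw [this, smul_eq_mul]
  rw [h1, h2, expCos_integral]
  ring

set_option maxHeartbeats 1000000 in
theorem gaussian_lines_intersection_cdf (r : ℝ) (hr : 0 < r) :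
    4 / π * ∫ t in (0 : ℝ)..r,
        (1 - Real.exp (-t ^ 2 / 2)) * t * Real.exp (-t ^ 2 / 2) * Real.arccos (t / r) =
    1 - 2 * Real.exp (-r ^ 2 / 4) * besselI0 (r ^ 2 / 4)
      + Real.exp (-r ^ 2 / 2) * besselI0 (r ^ 2 / 2) := by
  have hpi2 : (0:ℝ) ≤ π/2 := by positivity
  set g : ℝ → ℝ := fun t =>
    (1 - Real.exp (-t ^ 2 / 2)) * t * Real.exp (-t ^ 2 / 2) * Real.arccos (t / r) with hg
  have hgcont : Continuous g := by
    apply Continuous.mul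
    · fun_prop
    · exact Real.continuous_arccos.comp (continuous_id.div_const r)
  -- substitution t = r sin θ
  have hsub : (∫ t in (0:ℝ)..r, g t)
      = ∫ θ in (0:ℝ)..(π/2), (r * Real.cos θ) • g (r * Real.sin θ) := by
    have h := intervalIntegral.integral_comp_smul_deriv (a := (0:ℝ)) (b := π/2)
      (f := fun θ => r * Real.sin θ) (f' := fun θ => r * Real.cos θ) (g := g)
      (fun x _ => (Real.hasDerivAt_sin x).const_mul r)
      ((continuous_const.mul Real.continuous_cos).continuousOn) hgcont
    simp only [Real.sin_zero, Real.sin_pi_div_two, mul_zero, mul_one] at h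
    rw [← h]
    rfl
  -- the derivative of the auxiliary antiderivative
  set G : ℝ → ℝ := fun θ =>
    -Real.exp (-(r * Real.sin θ) ^ 2 / 2) + Real.exp (-(r * Real.sin θ) ^ 2 / 2) ^ 2 / 2 with hG
  set g1 : ℝ → ℝ := fun θ => (r ^ 2 * Real.sin θ * Real.cos θ) *
    (Real.exp (-(r * Real.sin θ) ^ 2 / 2) - Real.exp (-(r * Real.sin θ) ^ 2 / 2) ^ 2) with hg1
  have hGderiv : ∀ θ : ℝ, HasDerivAt G (g1 θ) θ := by
    intro θ
    have h0 : HasDerivAt (fun θ : ℝ => r * Real.sin θ) (r * Real.cos θ) θ :=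
      (Real.hasDerivAt_sin θ).const_mul r
    have hu : HasDerivAt (fun θ : ℝ => -(r * Real.sin θ) ^ 2 / 2)
        (-(2 * (r * Real.sin θ) ^ 1 * (r * Real.cos θ)) / 2) θ := ((h0.pow 2).neg).div_const 2
    have hE : HasDerivAt (fun θ : ℝ => Real.exp (-(r * Real.sin θ) ^ 2 / 2))
        (Real.exp (-(r * Real.sin θ) ^ 2 / 2) * (-(2 * (r * Real.sin θ) ^ 1 * (r * Real.cos θ)) / 2))
        θ := hu.exp
    have := (hE.neg).add ((hE.pow 2).div_const 2)
    exact this.congr_deriv (by simp only [hg1, Nat.cast_ofNat, show (2:ℕ) - 1 = 1 from rfl, pow_one]; ring)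
  have hcong : Set.EqOn (fun θ => (r * Real.cos θ) • g (r * Real.sin θ))
      (fun θ => (π/2 - θ) * g1 θ) (Set.uIcc (0:ℝ) (π/2)) := by
    intro θ hθ
    rw [Set.uIcc_of_le hpi2] at hθ
    have harc : Real.arccos (r * Real.sin θ / r) = π/2 - θ := by
      rw [mul_div_cancel_left₀ _ hr.ne', Real.arccos_eq_pi_div_two_sub_arcsin,
        Real.arcsin_sin (by linarith [hθ.1]) hθ.2]
    simp only [hg, hg1, smul_eq_mul]
    rw [harc]
    ring
  have hIcong : (∫ θ in (0:ℝ)..(π/2), (r * Real.cos θ) • g (r * Real.sin θ))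
      = ∫ θ in (0:ℝ)..(π/2), (π/2 - θ) * g1 θ :=
    intervalIntegral.integral_congr hcong
  -- integration by parts
  have hibp := intervalIntegral.integral_mul_deriv_eq_deriv_mul (a := (0:ℝ)) (b := π/2)
    (u := fun θ => π/2 - θ) (u' := fun _ => (-1:ℝ)) (v := G) (v' := g1)
    (fun x _ => by simpa using (hasDerivAt_id x).const_sub (π/2))
    (fun x _ => hGderiv x)
    (intervalIntegrable_const)
    ((by simp only [hg1]; fun_prop : Continuous g1).intervalIntegrable _ _)
  have hG0 : G 0 = -(1/2) := by
    simp [hG]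
    norm_num
  have hGpt : ∀ θ : ℝ, G θ
      = -Real.exp (-(r^2/2 * Real.sin θ^2)) + Real.exp (-(r^2 * Real.sin θ^2))/2 := by
    intro θ
    simp only [hG]
    have h1 : -(r * Real.sin θ)^2/2 = -(r^2/2 * Real.sin θ^2) := by ring
    rw [h1]
    congr 1
    rw [sq, ← Real.exp_add]
    congr 1
    ring_nf
  have hGint : (∫ θ in (0:ℝ)..(π/2), G θ)
      = -(π/2 * (Real.exp (-r^2/4) * besselI0 (r^2/4)))
        + (π/2 * (Real.exp (-r^2/2) * besselI0 (r^2/2)))/2 := by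
    rw [intervalIntegral.integral_congr (g := fun θ =>
        -Real.exp (-(r^2/2 * Real.sin θ^2)) + Real.exp (-(r^2 * Real.sin θ^2))/2)
        (fun θ _ => hGpt θ)]
    rw [intervalIntegral.integral_add
        ((by fun_prop : Continuous fun θ : ℝ => -Real.exp (-(r^2/2 * Real.sin θ^2))).intervalIntegrable _ _)
        (((by fun_prop : Continuous fun θ : ℝ => Real.exp (-(r^2 * Real.sin θ^2))).div_const 2).intervalIntegrable _ _),
      intervalIntegral.integral_neg, intervalIntegral.integral_div]
    have e1 := exp_sin_sq_integral (r^2/2)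
    have e2 := exp_sin_sq_integral (r^2)
    rw [show (r^2/2)/2 = r^2/4 by ring] at e1
    rw [show -(r^2/4) = -r^2/4 by ring] at e1
    rw [show (r^2)/2 = r^2/2 by ring] at e2
    rw [show -(r^2/2) = -r^2/2 by ring] at e2
    rw [e1, e2]
  have hneg : (∫ θ in (0:ℝ)..(π/2), (-1 : ℝ) * G θ) = -∫ θ in (0:ℝ)..(π/2), G θ := by
    rw [← intervalIntegral.integral_neg]
    congr 1 with θ
    ring
  rw [hsub, hIcong, hibp, hneg, hG0, hGint]
  have hpi : π ≠ 0 := Real.pi_ne_zero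
  field_simp
  ring
end

section
/- For every r with 0 ≤ r ≤ 1, ∫₀^r arccos(t/r)·arcsin(t)/√(1−t²) dt = (π/8)·Li₂(r²), where Li₂(x) := ∑_{k≥1} x^k/k². (For r = 0 the integral is 0.) -/
open Real intervalIntegral

namespace DilogAux

/-- Coefficients of the power series of `arcsin x / √(1-x²)`. -/
noncomputable def b : ℕ → ℝ
  | 0 => 1
  | j + 1 => b j * (2 * (j : ℝ) + 2) / (2 * (j : ℝ) + 3)

lemma b_pos : ∀ j, 0 < b j := by
  intro j
  induction j with
  | zero => norm_num [b]
  | succ j ih =>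
    rw [b]
    positivity

lemma b_le_one : ∀ j, b j ≤ 1 := by
  intro j
  induction j with
  | zero => norm_num [b]
  | succ j ih =>
    rw [b]
    rw [div_le_one (by positivity)]
    nlinarith [b_pos j]

/-- The series `∑ b_j x^(2j+1)`. -/
noncomputable def S (x : ℝ) : ℝ := ∑' j : ℕ, b j * x ^ (2 * j + 1)

/-- Its termwise derivative. -/
noncomputable def D (x : ℝ) : ℝ := ∑' j : ℕ, b j * ((2 * (j : ℝ) + 1) * x ^ (2 * j))

lemma summable_S {x : ℝ} (hx : |x| < 1) : Summable (fun j : ℕ => b j * x ^ (2 * j + 1)) := by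
  apply Summable.of_norm_bounded (g := fun j : ℕ => (x ^ 2) ^ j)
    (summable_geometric_of_lt_one (by positivity) (by nlinarith [abs_nonneg x, sq_abs x]))
  intro j
  have h1 : ‖b j * x ^ (2 * j + 1)‖ = b j * |x| ^ (2 * j + 1) := by
    rw [norm_mul, Real.norm_eq_abs, Real.norm_eq_abs, abs_of_pos (b_pos j), abs_pow]
  rw [h1]
  have h2 : |x| ^ (2 * j + 1) ≤ |x| ^ (2 * j) := by
    apply pow_le_pow_of_le_one (abs_nonneg x) hx.le
    omega
  have h3 : |x| ^ (2 * j) = (x ^ 2) ^ j := by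
    rw [pow_mul, sq_abs]
  calc b j * |x| ^ (2 * j + 1) ≤ 1 * |x| ^ (2 * j) := by
        apply mul_le_mul (b_le_one j) h2 (by positivity) one_pos.le
    _ = (x ^ 2) ^ j := by rw [one_mul, h3]

lemma summable_D' {ρ : ℝ} (hρ0 : 0 ≤ ρ) (hρ : ρ < 1) :
    Summable (fun j : ℕ => (2 * (j : ℝ) + 1) * (ρ ^ 2) ^ j) := by
  have hq : ‖ρ ^ 2‖ < 1 := by
    rw [Real.norm_eq_abs, abs_of_nonneg (sq_nonneg ρ)]
    nlinarith
  have h1 : Summable (fun j : ℕ => (j : ℝ) ^ 1 * (ρ ^ 2) ^ j) :=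
    summable_pow_mul_geometric_of_norm_lt_one 1 hq
  have h2 : Summable (fun j : ℕ => (ρ ^ 2) ^ j) := summable_geometric_of_lt_one (by positivity) (by nlinarith)
  have := (h1.mul_left 2).add h2
  apply this.congr
  intro j
  ring

lemma norm_D_term_le {x ρ : ℝ} (hx : |x| ≤ ρ) (j : ℕ) :
    ‖b j * ((2 * (j : ℝ) + 1) * x ^ (2 * j))‖ ≤ (2 * (j : ℝ) + 1) * (ρ ^ 2) ^ j := by
  have hb := b_pos j
  have hb1 := b_le_one j
  have h1 : ‖b j * ((2 * (j : ℝ) + 1) * x ^ (2 * j))‖ =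
      b j * ((2 * (j : ℝ) + 1) * (x ^ 2) ^ j) := by
    rw [norm_mul, norm_mul, Real.norm_eq_abs, Real.norm_eq_abs, Real.norm_eq_abs,
      abs_of_pos hb, abs_of_pos (by positivity : (0:ℝ) < 2 * (j : ℝ) + 1), abs_pow,
      pow_mul, sq_abs]
  rw [h1]
  have hx2 : x ^ 2 ≤ ρ ^ 2 := by
    have := abs_nonneg x
    nlinarith [sq_abs x]
  have h2 : (x ^ 2) ^ j ≤ (ρ ^ 2) ^ j := pow_le_pow_left₀ (sq_nonneg x) hx2 j
  calc b j * ((2 * (j : ℝ) + 1) * (x ^ 2) ^ j) ≤ 1 * ((2 * (j : ℝ) + 1) * (ρ ^ 2) ^ j) := by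
        apply mul_le_mul hb1 _ (by positivity) one_pos.le
        apply mul_le_mul_of_nonneg_left h2 (by positivity)
    _ = (2 * (j : ℝ) + 1) * (ρ ^ 2) ^ j := one_mul _

lemma summable_D {x : ℝ} (hx : |x| < 1) :
    Summable (fun j : ℕ => b j * ((2 * (j : ℝ) + 1) * x ^ (2 * j))) :=
  Summable.of_norm_bounded (summable_D' (abs_nonneg x) hx) (norm_D_term_le (le_refl |x|))

lemma hasDerivAt_S {x : ℝ} (hx : |x| < 1) : HasDerivAt S (D x) x := by
  set ρ : ℝ := (|x| + 1) / 2 with hρdef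
  have hρ0 : 0 ≤ ρ := by positivity
  have hρ1 : ρ < 1 := by
    rw [hρdef]; linarith
  have hxρ : |x| < ρ := by rw [hρdef]; linarith [abs_nonneg x]
  have hopen : IsOpen (Set.Ioo (-ρ) ρ) := isOpen_Ioo
  have hconn : IsPreconnected (Set.Ioo (-ρ) ρ) := (convex_Ioo _ _).isPreconnected
  have hmem : x ∈ Set.Ioo (-ρ) ρ := by
    constructor <;> [linarith [neg_abs_le x]; linarith [le_abs_self x]]
  have h0mem : (0 : ℝ) ∈ Set.Ioo (-ρ) ρ := by
    constructor <;> nlinarith [abs_nonneg x]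
  have hg : ∀ (j : ℕ) (y : ℝ), y ∈ Set.Ioo (-ρ) ρ →
      HasDerivAt (fun z => b j * z ^ (2 * j + 1)) (b j * ((2 * (j : ℝ) + 1) * y ^ (2 * j))) y := by
    intro j y _
    have := (hasDerivAt_pow (2 * j + 1) y).const_mul (b j)
    refine this.congr_deriv ?_
    push_cast
    ring_nf
  have hg' : ∀ (j : ℕ) (y : ℝ), y ∈ Set.Ioo (-ρ) ρ →
      ‖b j * ((2 * (j : ℝ) + 1) * y ^ (2 * j))‖ ≤ (2 * (j : ℝ) + 1) * (ρ ^ 2) ^ j := by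
    intro j y hy
    apply norm_D_term_le
    rw [abs_le]
    exact ⟨hy.1.le, hy.2.le⟩
  have hg0 : Summable (fun j : ℕ => b j * (0 : ℝ) ^ (2 * j + 1)) := by
    apply summable_zero.congr
    intro j
    simp
  exact hasDerivAt_tsum_of_isPreconnected (summable_D' hρ0 hρ1) hopen hconn hg hg' h0mem hg0 hmem

lemma ode {x : ℝ} (hx : |x| < 1) : (1 - x ^ 2) * D x = 1 + x * S x := by
  have hS : HasSum (fun j : ℕ => b j * x ^ (2 * j + 1)) (S x) := (summable_S hx).hasSum
  have hD : HasSum (fun j : ℕ => b j * ((2 * (j : ℝ) + 1) * x ^ (2 * j))) (D x) :=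
    (summable_D hx).hasSum
  set a : ℕ → ℝ := fun j => (2 * (j : ℝ) + 1) * b j * x ^ (2 * j) with ha
  have hterm : ∀ j : ℕ,
      (1 - x ^ 2) * (b j * ((2 * (j : ℝ) + 1) * x ^ (2 * j))) - x * (b j * x ^ (2 * j + 1)) =
        a j - a (j + 1) := by
    intro j
    have h3 : (2 * (j : ℝ) + 3) ≠ 0 := by positivity
    have hb : b (j + 1) = b j * (2 * (j : ℝ) + 2) / (2 * (j : ℝ) + 3) := rfl
    rw [ha]
    simp only [hb]
    push_cast
    have hpow1 : x ^ (2 * (j + 1)) = x ^ (2 * j) * x ^ 2 := by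
      rw [← pow_add]; ring_nf
    have hpow2 : x ^ (2 * j + 1) = x ^ (2 * j) * x := pow_succ x (2 * j)
    rw [hpow1, hpow2]
    field_simp
    ring
  have hsum2 : HasSum (fun j : ℕ => a j - a (j + 1)) ((1 - x ^ 2) * D x - x * S x) := by
    have := (hD.mul_left (1 - x ^ 2)).sub (hS.mul_left x)
    exact this.congr_fun fun j => (hterm j).symm
  have haz : Filter.Tendsto a Filter.atTop (nhds 0) := by
    have : Filter.Tendsto (fun j : ℕ => b j * ((2 * (j : ℝ) + 1) * x ^ (2 * j)))
        Filter.atTop (nhds 0) := hD.summable.tendsto_atTop_zero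
    apply this.congr
    intro j
    rw [ha]; ring
  have hlim : Filter.Tendsto (fun n : ℕ => ∑ i ∈ Finset.range n, (a i - a (i + 1)))
      Filter.atTop (nhds ((1 - x ^ 2) * D x - x * S x)) := hsum2.tendsto_sum_nat
  have hlim2 : Filter.Tendsto (fun n : ℕ => ∑ i ∈ Finset.range n, (a i - a (i + 1)))
      Filter.atTop (nhds (a 0 - 0)) := by
    simp only [Finset.sum_range_sub' a]
    exact Filter.Tendsto.const_sub (a 0) haz
  have := tendsto_nhds_unique hlim hlim2
  have ha0 : a 0 = 1 := by
    rw [ha]; simp [b]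
  rw [ha0, sub_zero] at this
  linarith

lemma S_zero : S 0 = 0 := by
  simp [S]

lemma deriv_G {y : ℝ} (hy : |y| < 1) :
    HasDerivAt (fun z => Real.sqrt (1 - z ^ 2) * S z - Real.arcsin z) 0 y := by
  have hy2 : 1 - y ^ 2 > 0 := by nlinarith [sq_abs y, abs_nonneg y]
  have hs : Real.sqrt (1 - y ^ 2) > 0 := Real.sqrt_pos.mpr hy2
  have hs2 : Real.sqrt (1 - y ^ 2) ^ 2 = 1 - y ^ 2 := Real.sq_sqrt hy2.le
  have h1 : HasDerivAt (fun z : ℝ => 1 - z ^ 2) (-(2 * y)) y := by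
    have := (hasDerivAt_pow 2 y).const_sub 1
    refine this.congr_deriv ?_
    push_cast; ring
  have h2 : HasDerivAt (fun z : ℝ => Real.sqrt (1 - z ^ 2))
      (1 / (2 * Real.sqrt (1 - y ^ 2)) * -(2 * y)) y :=
    (Real.hasDerivAt_sqrt hy2.ne').comp y h1
  have h3 : HasDerivAt (fun z : ℝ => Real.sqrt (1 - z ^ 2) * S z)
      ((1 / (2 * Real.sqrt (1 - y ^ 2)) * -(2 * y)) * S y + Real.sqrt (1 - y ^ 2) * D y) y :=
    h2.mul (hasDerivAt_S hy)
  have hy' := abs_lt.mp hy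
  have h4 : HasDerivAt Real.arcsin (1 / Real.sqrt (1 - y ^ 2)) y :=
    Real.hasDerivAt_arcsin (ne_of_gt hy'.1) (ne_of_lt hy'.2)
  have h5 := h3.sub h4
  refine h5.congr_deriv ?_
  have key := ode hy
  rw [eq_comm]
  field_simp
  linear_combination (-D y) * hs2 - key

lemma S_eq {x : ℝ} (hx : |x| < 1) : S x = Real.arcsin x / Real.sqrt (1 - x ^ 2) := by
  have hx2 : 1 - x ^ 2 > 0 := by nlinarith [sq_abs x, abs_nonneg x]
  have hs : Real.sqrt (1 - x ^ 2) > 0 := Real.sqrt_pos.mpr hx2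
  have hG : ∀ y ∈ Set.uIcc (0 : ℝ) x,
      HasDerivAt (fun z => Real.sqrt (1 - z ^ 2) * S z - Real.arcsin z) 0 y := by
    intro y hy
    apply deriv_G
    rcases Set.mem_uIcc.mp hy with ⟨h1, h2⟩ | ⟨h1, h2⟩
    · rw [abs_lt]; constructor <;> [nlinarith [neg_abs_le x, abs_nonneg x]; nlinarith [le_abs_self x]]
    · rw [abs_lt]; constructor <;> [nlinarith [neg_abs_le x]; nlinarith [le_abs_self x, abs_nonneg x]]
  have hint : IntervalIntegrable (fun _ : ℝ => (0 : ℝ)) MeasureTheory.volume 0 x :=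
    intervalIntegrable_const
  have hftc := intervalIntegral.integral_eq_sub_of_hasDerivAt hG hint
  simp only [intervalIntegral.integral_zero] at hftc
  have h0 : Real.sqrt (1 - (0:ℝ) ^ 2) * S 0 - Real.arcsin 0 = 0 := by
    simp [S_zero]
  have hx0 : Real.sqrt (1 - x ^ 2) * S x = Real.arcsin x := by
    linarith [hftc, h0]
  rw [eq_div_iff hs.ne']
  linear_combination hx0

lemma hasSum_arcsin_div {x : ℝ} (hx : |x| < 1) :
    HasSum (fun j : ℕ => b j * x ^ (2 * j + 1)) (Real.arcsin x / Real.sqrt (1 - x ^ 2)) := by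
  rw [← S_eq hx]
  exact (summable_S hx).hasSum

/-- Wallis integrals. -/
noncomputable def W (k : ℕ) : ℝ := ∫ θ in (0 : ℝ)..(π / 2), Real.cos θ ^ (2 * k)

lemma W_zero : W 0 = π / 2 := by
  simp [W]

lemma W_succ (j : ℕ) : W (j + 1) = (2 * (j : ℝ) + 1) / (2 * (j : ℝ) + 2) * W j := by
  have h := integral_cos_pow (a := 0) (b := π / 2) (2 * j)
  have he : 2 * (j + 1) = 2 * j + 2 := by ring
  rw [W, W, he, h]
  rw [Real.cos_pi_div_two, Real.sin_zero, Real.cos_zero, Real.sin_pi_div_two]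
  push_cast
  ring

lemma W_pos : ∀ j, 0 < W j := by
  intro j
  induction j with
  | zero => rw [W_zero]; positivity
  | succ j ih =>
    rw [W_succ]
    positivity

lemma bW (j : ℕ) : b j * W (j + 1) = π / (4 * ((j : ℝ) + 1)) := by
  induction j with
  | zero =>
    rw [b, W_succ, W_zero]
    push_cast
    ring
  | succ j ih =>
    rw [b, W_succ (j + 1)]
    push_cast
    have h3 : (2 * (j : ℝ) + 3) ≠ 0 := by positivity
    field_simp at ih ⊢
    linear_combination (2 * (j : ℝ) + 3) * ih

lemma K_eq (j : ℕ) :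
    ∫ θ in (0 : ℝ)..(π / 2), θ * (Real.cos θ ^ (2 * j + 1) * Real.sin θ) =
      W (j + 1) / (2 * (j : ℝ) + 2) := by
  have hc : (2 * (j : ℝ) + 2) ≠ 0 := by positivity
  have hu : ∀ x ∈ Set.uIcc (0 : ℝ) (π / 2), HasDerivAt (fun z : ℝ => z) (1 : ℝ) x :=
    fun x _ => hasDerivAt_id x
  have hv : ∀ x ∈ Set.uIcc (0 : ℝ) (π / 2),
      HasDerivAt (fun z : ℝ => -(Real.cos z ^ (2 * j + 2)) / (2 * (j : ℝ) + 2))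
        (Real.cos x ^ (2 * j + 1) * Real.sin x) x := by
    intro x _
    have h1 : HasDerivAt (fun z : ℝ => Real.cos z ^ (2 * j + 2))
        (((2 * j + 2 : ℕ) : ℝ) * Real.cos x ^ (2 * j + 1) * (-Real.sin x)) x :=
      (Real.hasDerivAt_cos x).pow (2 * j + 2)
    have h2 := (h1.neg).div_const (2 * (j : ℝ) + 2)
    refine h2.congr_deriv ?_
    push_cast
    field_simp
  have hu' : IntervalIntegrable (fun _ : ℝ => (1 : ℝ)) MeasureTheory.volume 0 (π / 2) :=
    intervalIntegrable_const
  have hv' : IntervalIntegrable (fun x : ℝ => Real.cos x ^ (2 * j + 1) * Real.sin x)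
      MeasureTheory.volume 0 (π / 2) := by
    apply Continuous.intervalIntegrable
    fun_prop
  have h := intervalIntegral.integral_mul_deriv_eq_deriv_mul hu hv hu' hv'
  rw [h]
  have hb : (π / 2) * (-(Real.cos (π / 2) ^ (2 * j + 2)) / (2 * (j : ℝ) + 2)) = 0 := by
    rw [Real.cos_pi_div_two, zero_pow (by omega)]
    ring
  have ha : (0 : ℝ) * (-(Real.cos 0 ^ (2 * j + 2)) / (2 * (j : ℝ) + 2)) = 0 := by ring
  rw [hb, ha]
  have : ∫ x in (0 : ℝ)..(π / 2), (1 : ℝ) * (-(Real.cos x ^ (2 * j + 2)) / (2 * (j : ℝ) + 2)) =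
      (-(1 : ℝ) / (2 * (j : ℝ) + 2)) * ∫ x in (0 : ℝ)..(π / 2), Real.cos x ^ (2 * j + 2) := by
    rw [← intervalIntegral.integral_const_mul]
    apply intervalIntegral.integral_congr
    intro x _
    ring
  rw [this, W]
  have he : 2 * (j + 1) = 2 * j + 2 := by ring
  rw [he]
  ring

lemma intF {r : ℝ} (hr : 0 < r) (j : ℕ) :
    ∫ t in (0 : ℝ)..r, Real.arccos (t / r) * t ^ (2 * j + 1) =
      r ^ (2 * j + 2) * ∫ θ in (0 : ℝ)..(π / 2), θ * (Real.cos θ ^ (2 * j + 1) * Real.sin θ) := by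
  have hderiv : ∀ x ∈ Set.uIcc (0 : ℝ) (π / 2),
      HasDerivAt (fun θ : ℝ => r * Real.cos θ) (-(r * Real.sin x)) x := by
    intro x _
    have := (Real.hasDerivAt_cos x).const_mul r
    refine this.congr_deriv ?_
    ring
  have hcont : ContinuousOn (fun x : ℝ => -(r * Real.sin x)) (Set.uIcc (0 : ℝ) (π / 2)) := by
    fun_prop
  have hg : Continuous (fun t : ℝ => Real.arccos (t / r) * t ^ (2 * j + 1)) := by
    apply Continuous.mul
    · exact Real.continuous_arccos.comp (continuous_id.div_const r)
    · exact continuous_pow _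
  have h := intervalIntegral.integral_comp_smul_deriv hderiv hcont hg
  rw [Real.cos_zero, Real.cos_pi_div_two, mul_one, mul_zero] at h
  have hL : ∫ x in (0 : ℝ)..(π / 2),
      (-(r * Real.sin x)) • (((fun t : ℝ => Real.arccos (t / r) * t ^ (2 * j + 1)) ∘
        (fun θ : ℝ => r * Real.cos θ)) x) =
      -(r ^ (2 * j + 2) * ∫ θ in (0 : ℝ)..(π / 2), θ * (Real.cos θ ^ (2 * j + 1) * Real.sin θ)) := by
    rw [← intervalIntegral.integral_const_mul, ← intervalIntegral.integral_neg]
    apply intervalIntegral.integral_congr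
    intro x hx
    have hx' : x ∈ Set.Icc (0 : ℝ) (π / 2) := by
      rwa [Set.uIcc_of_le (by positivity)] at hx
    have h1 : r * Real.cos x / r = Real.cos x := by
      field_simp
    have h2 : Real.arccos (Real.cos x) = x :=
      Real.arccos_cos hx'.1 (by linarith [hx'.2, Real.pi_pos])
    simp only [Function.comp_apply, smul_eq_mul, h1, h2]
    rw [mul_pow]
    ring
  rw [hL] at h
  rw [intervalIntegral.integral_symm 0 r] at h
  linarith [h]

lemma intF' {r : ℝ} (hr : 0 < r) (j : ℕ) :
    ∫ t in (0 : ℝ)..r, Real.arccos (t / r) * (b j * t ^ (2 * j + 1)) =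
      π / (8 * ((j : ℝ) + 1) ^ 2) * r ^ (2 * j + 2) := by
  have h1 : ∫ t in (0 : ℝ)..r, Real.arccos (t / r) * (b j * t ^ (2 * j + 1)) =
      b j * ∫ t in (0 : ℝ)..r, Real.arccos (t / r) * t ^ (2 * j + 1) := by
    rw [← intervalIntegral.integral_const_mul]
    apply intervalIntegral.integral_congr
    intro x _
    ring
  rw [h1, intF hr j, K_eq j]
  have h2 := bW j
  have h3 : (2 * (j : ℝ) + 2) ≠ 0 := by positivity
  have h4 : ((j : ℝ) + 1) ≠ 0 := by positivity
  field_simp at h2 ⊢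
  linear_combination 2 * h2

end DilogAux

/-- Euler's dilogarithm `Li₂(x) = ∑_{k ≥ 1} x^k / k²`. -/
noncomputable def dilog (x : ℝ) : ℝ :=
  ∑' k : ℕ, x ^ (k + 1) / ((k : ℝ) + 1) ^ 2

theorem integral_arccos_arcsin_eq_dilog (r : ℝ) (hr0 : 0 ≤ r) (hr1 : r ≤ 1) :
    ∫ t in (0 : ℝ)..r, Real.arccos (t / r) * Real.arcsin t / Real.sqrt (1 - t ^ 2) =
      π / 8 * dilog (r ^ 2) := by
  rcases eq_or_lt_of_le hr0 with h | hr
  · rw [← h]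
    simp [dilog]
  clear hr0
  open DilogAux in
  set F : ℕ → ℝ → ℝ := fun j t => Real.arccos (t / r) * (DilogAux.b j * t ^ (2 * j + 1)) with hF
  have hFcont : ∀ j, Continuous (F j) := by
    intro j
    apply Continuous.mul
    · exact Real.continuous_arccos.comp (continuous_id.div_const r)
    · exact continuous_const.mul (continuous_pow _)
  have hFint : ∀ j, MeasureTheory.IntegrableOn (F j) (Set.Ioc 0 r) MeasureTheory.volume := by
    intro j
    exact (hFcont j).integrableOn_Ioc
  have hIoc : ∀ j, ∫ t in Set.Ioc (0 : ℝ) r, F j t =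
      π / (8 * ((j : ℝ) + 1) ^ 2) * r ^ (2 * j + 2) := by
    intro j
    rw [← intervalIntegral.integral_of_le hr.le]
    exact DilogAux.intF' hr j
  have hFnonneg : ∀ j, ∀ t ∈ Set.Ioc (0 : ℝ) r, 0 ≤ F j t := by
    intro j t ht
    apply mul_nonneg (Real.arccos_nonneg _)
    exact mul_nonneg (DilogAux.b_pos j).le (pow_nonneg ht.1.le _)
  have hnorm : ∀ j, ∫ t in Set.Ioc (0 : ℝ) r, ‖F j t‖ =
      π / (8 * ((j : ℝ) + 1) ^ 2) * r ^ (2 * j + 2) := by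
    intro j
    rw [← hIoc j]
    apply MeasureTheory.setIntegral_congr_fun measurableSet_Ioc
    intro t ht
    exact Real.norm_of_nonneg (hFnonneg j t ht)
  have hbase : Summable (fun j : ℕ => 1 / ((j : ℝ) + 1) ^ 2) := by
    have h1 : Summable (fun n : ℕ => 1 / (n : ℝ) ^ 2) :=
      Real.summable_one_div_nat_pow.mpr one_lt_two
    have := (summable_nat_add_iff 1).mpr h1
    apply this.congr
    intro j
    push_cast
    ring
  have hsummable : Summable (fun j : ℕ => π / (8 * ((j : ℝ) + 1) ^ 2) * r ^ (2 * j + 2)) := by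
    apply Summable.of_nonneg_of_le (fun j => by positivity)
      (fun j => ?_) (hbase.mul_left (π / 8))
    have h1 : r ^ (2 * j + 2) ≤ 1 := pow_le_one₀ hr.le hr1
    have h2 : (0 : ℝ) < ((j : ℝ) + 1) ^ 2 := by positivity
    calc π / (8 * ((j : ℝ) + 1) ^ 2) * r ^ (2 * j + 2) ≤
        π / (8 * ((j : ℝ) + 1) ^ 2) * 1 := by
          apply mul_le_mul_of_nonneg_left h1 (by positivity)
      _ = π / 8 * (1 / ((j : ℝ) + 1) ^ 2) := by field_simp
  have hsum : Summable fun j : ℕ => ∫ t in Set.Ioc (0 : ℝ) r, ‖F j t‖ := by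
    apply hsummable.congr
    intro j
    rw [hnorm j]
  have hswap := MeasureTheory.integral_tsum_of_summable_integral_norm hFint hsum
  have hae : ∀ᵐ t ∂(MeasureTheory.volume.restrict (Set.Ioc (0 : ℝ) r)),
      (∑' j, F j t) = Real.arccos (t / r) * Real.arcsin t / Real.sqrt (1 - t ^ 2) := by
    have h₁ : ∀ᵐ t ∂(MeasureTheory.volume.restrict (Set.Ioc (0 : ℝ) r)),
        t ∈ Set.Ioc (0 : ℝ) r := MeasureTheory.ae_restrict_mem measurableSet_Ioc
    have h₂ : ∀ᵐ t : ℝ ∂(MeasureTheory.volume.restrict (Set.Ioc (0 : ℝ) r)), t ≠ 1 := by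
      apply MeasureTheory.ae_restrict_of_ae
      have h1 : MeasureTheory.volume ({(1 : ℝ)} : Set ℝ) = 0 := Real.volume_singleton
      rw [MeasureTheory.ae_iff]
      convert h1 using 2
      ext t
      simp
    filter_upwards [h₁, h₂] with t ht ht1
    have hlt : |t| < 1 := by
      rw [abs_lt]
      constructor
      · linarith [ht.1]
      · rcases lt_or_eq_of_le (le_trans ht.2 hr1) with h | h
        · exact h
        · exact absurd h ht1
    have hs := DilogAux.hasSum_arcsin_div hlt
    have := (hs.mul_left (Real.arccos (t / r))).tsum_eq
    rw [hF]
    simp only []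
    rw [this, mul_div_assoc]
  have hmain : ∫ t in (0 : ℝ)..r, Real.arccos (t / r) * Real.arcsin t / Real.sqrt (1 - t ^ 2) =
      ∑' j : ℕ, π / (8 * ((j : ℝ) + 1) ^ 2) * r ^ (2 * j + 2) := by
    rw [intervalIntegral.integral_of_le hr.le,
      ← MeasureTheory.integral_congr_ae hae, ← hswap]
    exact tsum_congr hIoc
  rw [hmain]
  rw [dilog, ← tsum_mul_left]
  apply tsum_congr
  intro j
  have h1 : (r ^ 2) ^ (j + 1) = r ^ (2 * j + 2) := by
    rw [← pow_mul]
    congr 1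
  rw [h1]
  have h2 : ((j : ℝ) + 1) ^ 2 ≠ 0 := by positivity
  field_simp
end
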